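/- arXiv:1810.04331 — 6 statements merged into one kernel-verified Lean document; each statement's English description precedes it below -/
import Mathlib

section
/- There exists an assignment problem with distributional constraints in which two Pareto-efficient allocations differ in the number of assigned students: with 3 types t1,t2,t3 (10 students each), one school s with capacity 20, and constraints x_{t1,s}+x_{t2,s} ≤ 10 and x_{t1,s}+x_{t3,s} ≤ 10, the allocation assigning 10 students of type t1 to s is Pareto efficient and assigns 10 students, while the allocation assigning 10 students of type t2 and 10 students of type t3 to s is Pareto efficient and assigns 20 students. -/
/-!  One regular school `s` of capacity 20, three types `t1,t2,t3` (encoded `0,1,2 : Fin 3`)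
with 10 students each (student `i : Fin 30` has type `i / 10`).  An allocation assigns each
student to `s` (`true`) or to the outside option `φ` (`false`); every student strictly
prefers `s` to `φ`.  Constraints: at most 10 students of types `t1,t2` at `s`, and at most
10 students of types `t1,t3` at `s`. -/

def sType (i : Fin 30) : Fin 3 := ⟨i.val / 10, by omega⟩

def assigned (x : Fin 30 → Bool) : Finset (Fin 30) :=
  Finset.univ.filter (fun i => x i = true)

def ofType (x : Fin 30 → Bool) (t : Fin 3) : Finset (Fin 30) :=
  Finset.univ.filter (fun i => x i = true ∧ sType i = t)

/-- Feasibility with respect to the capacity and the two distributional constraints. -/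
def Feasible (x : Fin 30 → Bool) : Prop :=
  (assigned x).card ≤ 20 ∧
  (ofType x 0).card + (ofType x 1).card ≤ 10 ∧
  (ofType x 0).card + (ofType x 2).card ≤ 10

/-- `x` Pareto dominates `y`: no student worse off (anyone assigned in `y` is assigned in
`x`) and some student strictly better off. -/
def ParetoDom (x y : Fin 30 → Bool) : Prop :=
  (∀ i, y i = true → x i = true) ∧ ∃ i, x i = true ∧ y i = false

/-- Pareto efficiency with respect to the distributional constraints. -/
def ParetoEff (x : Fin 30 → Bool) : Prop :=
  Feasible x ∧ ¬ ∃ y, Feasible y ∧ ParetoDom y x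

lemma card_ofType_zero_ge (y : Fin 30 → Bool) (h : ∀ i : Fin 30, i.val < 10 → y i = true) :
    10 ≤ (ofType y 0).card := by
  have hsub : (Finset.univ.filter (fun j : Fin 30 => j.val < 10)) ⊆ ofType y 0 := by
    intro j hj
    rw [Finset.mem_filter] at hj
    rw [ofType, Finset.mem_filter]
    refine ⟨Finset.mem_univ j, h j hj.2, ?_⟩
    simp only [sType, Fin.ext_iff]
    omega
  have := Finset.card_le_card hsub
  have hc : (Finset.univ.filter (fun j : Fin 30 => j.val < 10)).card = 10 := by decide
  omega

/-- The allocation assigning the 10 students of type `t1` is Pareto efficient and assigns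
10 students, while the allocation assigning the 10 students of each of types `t2` and `t3`
is Pareto efficient and assigns 20 students. -/
theorem stmt0 :
    ParetoEff (fun i => decide (i.val < 10)) ∧
    (assigned (fun i => decide (i.val < 10))).card = 10 ∧
    ParetoEff (fun i => decide (10 ≤ i.val)) ∧
    (assigned (fun i => decide (10 ≤ i.val))).card = 20 := by
  refine ⟨⟨⟨by decide, by decide, by decide⟩, ?_⟩, by decide, ⟨⟨by decide, by decide, by decide⟩, ?_⟩, by decide⟩
  · rintro ⟨y, ⟨-, h1, h2⟩, hall, i, hyi, hxi⟩
    simp only [decide_eq_false_iff_not, not_lt] at hxi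
    have hall' : ∀ j : Fin 30, j.val < 10 → y j = true := by
      intro j hj; exact hall j (by simp [hj])
    have h10 := card_ofType_zero_ge y hall'
    have hit : sType i = 1 ∨ sType i = 2 := by
      simp only [sType, Fin.ext_iff]
      omega
    rcases hit with ht | ht
    · have : i ∈ ofType y 1 := by
        rw [ofType, Finset.mem_filter]
        exact ⟨Finset.mem_univ i, hyi, ht⟩
      have := Finset.card_pos.mpr ⟨i, this⟩
      omega
    · have : i ∈ ofType y 2 := by
        rw [ofType, Finset.mem_filter]
        exact ⟨Finset.mem_univ i, hyi, ht⟩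
      have := Finset.card_pos.mpr ⟨i, this⟩
      omega
  · rintro ⟨y, ⟨hcap, -, -⟩, hall, i, hyi, hxi⟩
    simp only [decide_eq_false_iff_not, not_le] at hxi
    have hsub : insert i (assigned (fun j => decide (10 ≤ j.val))) ⊆ assigned y := by
      intro j hj
      rcases Finset.mem_insert.mp hj with rfl | hj
      · simp [assigned, hyi]
      · rw [assigned, Finset.mem_filter] at hj ⊢
        exact ⟨Finset.mem_univ j, hall j hj.2⟩
    have hni : i ∉ assigned (fun j => decide (10 ≤ j.val)) := by
      simp [assigned]; omega
    have := Finset.card_le_card hsub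
    rw [Finset.card_insert_of_notMem hni] at this
    have h20 : (assigned (fun j : Fin 30 => decide (10 ≤ j.val))).card = 20 := by decide
    omega
end

section
/- Let x be a nonnegative fractional matrix indexed by students N and schools M∪{φ} with ∑_{s} x_{i,s} = 1 for every student i. Then there exists an integral matrix y (each student assigned to exactly one school) such that for every type t and every regular school s, ⌊∑_{i: t_i=t} x_{i,s}⌋ ≤ ∑_{i: t_i=t} y_{i,s} ≤ ⌈∑_{i: t_i=t} x_{i,s}⌉, and ⌊∑_i x_{i,φ}⌋ ≤ ∑_i y_{i,φ} ≤ ⌈∑_i x_{i,φ}⌉. -/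
open Finset

/-- Discrete intermediate value: an integer `K` between the sum of lower and upper integer
bounds can be achieved by choosing an integer in each interval. -/
lemma stmt1_lemA {α : Type*} [DecidableEq α] (S : Finset α) :
    ∀ (lo hi : α → ℤ), (∀ s ∈ S, lo s ≤ hi s) → ∀ K : ℤ,
    (∑ s ∈ S, lo s ≤ K) → (K ≤ ∑ s ∈ S, hi s) →
    ∃ n : α → ℤ, (∀ s ∈ S, lo s ≤ n s ∧ n s ≤ hi s) ∧ ∑ s ∈ S, n s = K := by
  induction S using Finset.cons_induction with
  | empty =>
    intro lo hi _ K h1 h2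
    simp only [Finset.sum_empty] at h1 h2
    exact ⟨fun _ => 0, by simp, by simp; omega⟩
  | cons s₀ S hs ih =>
    intro lo hi h K h1 h2
    rw [Finset.sum_cons] at h1 h2
    have hAB : ∑ s ∈ S, lo s ≤ ∑ s ∈ S, hi s :=
      Finset.sum_le_sum fun s hsS => h s (Finset.mem_cons_of_mem hsS)
    have h0 : lo s₀ ≤ hi s₀ := h s₀ (Finset.mem_cons_self s₀ S)
    set A := ∑ s ∈ S, lo s with hA
    set B := ∑ s ∈ S, hi s with hB
    set v := max (lo s₀) (min (hi s₀) (K - A)) with hv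
    have hmc := max_choice (lo s₀) (min (hi s₀) (K - A))
    have hminc := min_choice (hi s₀) (K - A)
    have hm1 := min_le_left (hi s₀) (K - A)
    have hm2 := min_le_right (hi s₀) (K - A)
    have hv1 : lo s₀ ≤ v := le_max_left _ _
    have hv2 : v ≤ hi s₀ := by rcases hmc with h' | h' <;> omega
    have hv3 : A ≤ K - v := by rcases hmc with h' | h' <;> rcases hminc with h'' | h'' <;> omega
    have hv4 : K - v ≤ B := by rcases hmc with h' | h' <;> rcases hminc with h'' | h'' <;> omega
    obtain ⟨n, hn, hsum⟩ := ih lo hi (fun s hsS => h s (Finset.mem_cons_of_mem hsS)) (K - v) hv3 hv4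
    refine ⟨Function.update n s₀ v, ?_, ?_⟩
    · intro s hsS
      rcases Finset.mem_cons.mp hsS with rfl | hsS'
      · rw [Function.update_self]; exact ⟨hv1, hv2⟩
      · have hne : s ≠ s₀ := fun h' => hs (h' ▸ hsS')
        rw [Function.update_of_ne hne]; exact hn s hsS'
    · rw [Finset.sum_cons, Function.update_self, Finset.sum_update_of_notMem hs, hsum]
      ring

/-- The fiber of `Sigma.fst` over `s` is equivalent to `β s`. -/
def stmt1_fiberEquiv {M : Type*} (β : M → Type*) (s : M) :
    {p : Σ m, β m // p.1 = s} ≃ β s where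
  toFun := fun p => p.2 ▸ p.1.2
  invFun := fun b => ⟨⟨s, b⟩, rfl⟩
  left_inv := fun ⟨⟨m, b⟩, h⟩ => by subst h; rfl
  right_inv := fun b => rfl

/-- Given target counts for each (type, school) pair summing to the number of students of each
type, there is an assignment realizing these counts. -/
lemma stmt1_exists_assignment {N M T : Type} [Fintype N] [Fintype M] [Fintype T]
    [DecidableEq M] [DecidableEq T] (tpy : N → T) (c : T → M → ℕ)
    (hc : ∀ t, ∑ s, c t s = (Finset.univ.filter (fun i => tpy i = t)).card) :
    ∃ a : N → M, ∀ t s,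
      (Finset.univ.filter (fun i => tpy i = t ∧ a i = s)).card = c t s := by
  have e : ∀ t, {i // tpy i = t} ≃ Σ s : M, Fin (c t s) := fun t =>
    Fintype.equivOfCardEq (by
      rw [Fintype.card_subtype, Fintype.card_sigma]
      simp [hc t])
  set a : N → M := fun i => (e (tpy i) ⟨i, rfl⟩).1 with ha
  refine ⟨a, ?_⟩
  intro t s
  have key : ∀ (i : N) (h : tpy i = t), a i = (e t ⟨i, h⟩).1 := by
    intro i h; subst h; rfl
  have E : {i // tpy i = t ∧ a i = s} ≃ {p : Σ s' : M, Fin (c t s') // p.1 = s} :=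
    { toFun := fun i => ⟨e t ⟨i.1, i.2.1⟩, by rw [← key i.1 i.2.1]; exact i.2.2⟩
      invFun := fun p => ⟨((e t).symm p.1).1,
        ((e t).symm p.1).2, by
          rw [key _ ((e t).symm p.1).2]
          rw [show (⟨((e t).symm p.1).1, ((e t).symm p.1).2⟩ : {i // tpy i = t})
                = (e t).symm p.1 from rfl]
          rw [Equiv.apply_symm_apply]
          exact p.2⟩
      left_inv := fun i => Subtype.ext (by simp)
      right_inv := fun p => Subtype.ext (by simp) }
  calc (Finset.univ.filter (fun i => tpy i = t ∧ a i = s)).card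
      = Fintype.card {i // tpy i = t ∧ a i = s} := (Fintype.card_subtype _).symm
    _ = Fintype.card (Fin (c t s)) := Fintype.card_congr (E.trans (stmt1_fiberEquiv _ s))
    _ = c t s := Fintype.card_fin _

/-- **Rounding a fractional assignment.**  Given a nonnegative fractional assignment `x` of
students `N` to schools `M` (with outside option `phi ∈ M`) with unit row sums, there is an
integral assignment (a function `a : N → M`) whose type-aggregates round the type-aggregates
of `x`: for every type `t` and regular school `s`, the number of students of type `t`
assigned to `s` lies between `⌊∑_{i : tpy i = t} x i s⌋` and `⌈∑_{i : tpy i = t} x i s⌉`,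
and the number of students assigned to `phi` lies between `⌊∑_i x i phi⌋` and
`⌈∑_i x i phi⌉`. -/
theorem stmt1 {N M T : Type} [Fintype N] [Fintype M] [Fintype T]
    [DecidableEq M] [DecidableEq T]
    (phi : M) (tpy : N → T) (x : N → M → ℝ)
    (hnn : ∀ i s, 0 ≤ x i s) (hrow : ∀ i, ∑ s, x i s = 1) :
    ∃ a : N → M,
      (∀ t : T, ∀ s : M, s ≠ phi →
        (⌊∑ i ∈ Finset.univ.filter (fun i => tpy i = t), x i s⌋ : ℝ) ≤
          (Finset.univ.filter (fun i => tpy i = t ∧ a i = s)).card ∧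
        ((Finset.univ.filter (fun i => tpy i = t ∧ a i = s)).card : ℝ) ≤
          ⌈∑ i ∈ Finset.univ.filter (fun i => tpy i = t), x i s⌉) ∧
      (⌊∑ i, x i phi⌋ : ℝ) ≤ (Finset.univ.filter (fun i => a i = phi)).card ∧
      ((Finset.univ.filter (fun i => a i = phi)).card : ℝ) ≤ ⌈∑ i, x i phi⌉ := by
  set F : T → Finset N := fun t => Finset.univ.filter (fun i => tpy i = t) with hF
  set X : T → M → ℝ := fun t s => ∑ i ∈ F t, x i s with hX
  have hXnn : ∀ t s, 0 ≤ X t s := fun t s => Finset.sum_nonneg fun i _ => hnn i s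
  have hXrow : ∀ t, ∑ s, X t s = ((F t).card : ℝ) := by
    intro t
    rw [hX, Finset.sum_comm]
    simp [hrow]
  have hfib : ∑ t, X t phi = ∑ i, x i phi := by
    rw [hX, hF]
    exact Finset.sum_fiberwise Finset.univ tpy (fun i => x i phi)
  have hSerase : ∀ t, ∑ s ∈ Finset.univ.erase phi, X t s = ((F t).card : ℝ) - X t phi := by
    intro t
    have h1 := hXrow t
    rw [← Finset.sum_erase_add _ _ (Finset.mem_univ phi)] at h1
    linarith
  -- Step 1: round the phi column across types so that the total is ⌊∑ i, x i phi⌋.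
  set K : ℤ := ⌊∑ i, x i phi⌋ with hK
  obtain ⟨m, hm, hmsum⟩ := stmt1_lemA Finset.univ (fun t => ⌊X t phi⌋) (fun t => ⌈X t phi⌉)
    (fun t _ => Int.floor_le_ceil _) K
    (by
      rw [hK, Int.le_floor]
      push_cast
      rw [← hfib]
      exact Finset.sum_le_sum fun t _ => Int.floor_le _)
    (by
      have h1 : (K : ℝ) ≤ ∑ t, (⌈X t phi⌉ : ℝ) := by
        calc (K : ℝ) ≤ ∑ i, x i phi := Int.floor_le _
          _ = ∑ t, X t phi := hfib.symm
          _ ≤ ∑ t, (⌈X t phi⌉ : ℝ) := Finset.sum_le_sum fun t _ => Int.le_ceil _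
      exact_mod_cast h1)
  -- Step 2: for each type, round the regular columns to match the remaining row sum.
  have step2 : ∀ t, ∃ n : M → ℤ,
      (∀ s ∈ Finset.univ.erase phi, ⌊X t s⌋ ≤ n s ∧ n s ≤ ⌈X t s⌉) ∧
      ∑ s ∈ Finset.univ.erase phi, n s = ((F t).card : ℤ) - m t := by
    intro t
    have hmt := hm t (Finset.mem_univ t)
    have c3 := Int.ceil_lt_add_one (X t phi)
    have c4 := Int.sub_one_lt_floor (X t phi)
    have cast1 : ((m t : ℤ) : ℝ) ≤ (⌈X t phi⌉ : ℝ) := by exact_mod_cast hmt.2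
    have cast2 : ((⌊X t phi⌋ : ℤ) : ℝ) ≤ ((m t : ℤ) : ℝ) := by exact_mod_cast hmt.1
    apply stmt1_lemA _ _ _ (fun s _ => Int.floor_le_ceil _)
    · have hlt : (∑ s ∈ Finset.univ.erase phi, (⌊X t s⌋ : ℝ)) <
          ((F t).card : ℝ) - (m t : ℝ) + 1 := by
        have hle : (∑ s ∈ Finset.univ.erase phi, (⌊X t s⌋ : ℝ)) ≤
            ∑ s ∈ Finset.univ.erase phi, X t s :=
          Finset.sum_le_sum fun s _ => Int.floor_le _
        rw [hSerase t] at hle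
        linarith
      have hlt' : (∑ s ∈ Finset.univ.erase phi, ⌊X t s⌋) < ((F t).card : ℤ) - m t + 1 := by
        exact_mod_cast hlt
      omega
    · have hlt : ((F t).card : ℝ) - (m t : ℝ) <
          (∑ s ∈ Finset.univ.erase phi, (⌈X t s⌉ : ℝ)) + 1 := by
        have hle : (∑ s ∈ Finset.univ.erase phi, X t s) ≤
            ∑ s ∈ Finset.univ.erase phi, (⌈X t s⌉ : ℝ) :=
          Finset.sum_le_sum fun s _ => Int.le_ceil _
        rw [hSerase t] at hle
        linarith
      have hlt' : ((F t).card : ℤ) - m t < (∑ s ∈ Finset.univ.erase phi, ⌈X t s⌉) + 1 := by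
        exact_mod_cast hlt
      omega
  choose nn hnn2 hnnsum using step2
  -- Assemble integer counts.
  set z : T → M → ℤ := fun t s => if s = phi then m t else nn t s with hz
  have hz0 : ∀ t s, 0 ≤ z t s := by
    intro t s
    rw [hz]
    dsimp only
    split_ifs with hsphi
    · exact le_trans (Int.floor_nonneg.mpr (hXnn t phi)) (hm t (Finset.mem_univ t)).1
    · exact le_trans (Int.floor_nonneg.mpr (hXnn t s))
        ((hnn2 t s (Finset.mem_erase.mpr ⟨hsphi, Finset.mem_univ s⟩)).1)
  have hzsum : ∀ t, ∑ s, z t s = ((F t).card : ℤ) := by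
    intro t
    rw [← Finset.sum_erase_add _ _ (Finset.mem_univ phi)]
    have h1 : ∑ s ∈ Finset.univ.erase phi, z t s = ∑ s ∈ Finset.univ.erase phi, nn t s := by
      refine Finset.sum_congr rfl fun s hsmem => ?_
      rw [hz]
      exact if_neg (Finset.mem_erase.mp hsmem).1
    rw [h1, hnnsum t]
    simp [hz]
  set c : T → M → ℕ := fun t s => (z t s).toNat with hc
  have hcsum : ∀ t, ∑ s, c t s = (Finset.univ.filter (fun i => tpy i = t)).card := by
    intro t
    have h1 : ((∑ s, c t s : ℕ) : ℤ) = (((F t).card : ℕ) : ℤ) := by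
      push_cast [hc]
      rw [Finset.sum_congr rfl fun s _ => Int.toNat_of_nonneg (hz0 t s)]
      exact hzsum t
    exact_mod_cast h1
  obtain ⟨a, hacard⟩ := stmt1_exists_assignment tpy c hcsum
  refine ⟨a, ?_, ?_, ?_⟩
  · intro t s hsphi
    have hzs : z t s = nn t s := if_neg hsphi
    have hbd := hnn2 t s (Finset.mem_erase.mpr ⟨hsphi, Finset.mem_univ s⟩)
    have hcz : ((c t s : ℕ) : ℤ) = z t s := Int.toNat_of_nonneg (hz0 t s)
    have hlo : (⌊X t s⌋ : ℤ) ≤ ((c t s : ℕ) : ℤ) := by rw [hcz, hzs]; exact hbd.1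
    have hhi : ((c t s : ℕ) : ℤ) ≤ ⌈X t s⌉ := by rw [hcz, hzs]; exact hbd.2
    rw [hacard t s]
    constructor
    · exact_mod_cast hlo
    · exact_mod_cast hhi
  · have hcardphi : (Finset.univ.filter (fun i => a i = phi)).card = ∑ t, c t phi := by
      rw [Finset.card_eq_sum_card_fiberwise (f := tpy) (t := Finset.univ)
        (fun i _ => Finset.mem_univ (tpy i))]
      refine Finset.sum_congr rfl fun t _ => ?_
      rw [← hacard t phi]
      congr 1
      ext i
      simp only [Finset.mem_filter, Finset.mem_univ, true_and]
      tauto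
    have hsum : ((∑ t, c t phi : ℕ) : ℤ) = K := by
      push_cast [hc]
      rw [Finset.sum_congr rfl fun t _ => Int.toNat_of_nonneg (hz0 t phi)]
      rw [Finset.sum_congr rfl fun t _ => (show z t phi = m t from if_pos rfl)]
      exact hmsum
    rw [hcardphi]
    have : ((∑ t, c t phi : ℕ) : ℝ) = (K : ℝ) := by exact_mod_cast hsum
    rw [this, hK]
  · have hcardphi : (Finset.univ.filter (fun i => a i = phi)).card = ∑ t, c t phi := by
      rw [Finset.card_eq_sum_card_fiberwise (f := tpy) (t := Finset.univ)
        (fun i _ => Finset.mem_univ (tpy i))]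
      refine Finset.sum_congr rfl fun t _ => ?_
      rw [← hacard t phi]
      congr 1
      ext i
      simp only [Finset.mem_filter, Finset.mem_univ, true_and]
      tauto
    have hsum : ((∑ t, c t phi : ℕ) : ℤ) = K := by
      push_cast [hc]
      rw [Finset.sum_congr rfl fun t _ => Int.toNat_of_nonneg (hz0 t phi)]
      rw [Finset.sum_congr rfl fun t _ => (show z t phi = m t from if_pos rfl)]
      exact hmsum
    rw [hcardphi]
    have h2 : ((∑ t, c t phi : ℕ) : ℝ) = (K : ℝ) := by exact_mod_cast hsum
    rw [h2, hK]
    have : (⌊∑ i, x i phi⌋ : ℤ) ≤ ⌈∑ i, x i phi⌉ := Int.floor_le_ceil _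
    exact_mod_cast this
end

section
/- Let x be a feasible fractional assignment satisfying, for every school s and every subset of types R ∈ Z(s), lower and upper bounds q̲_{R,s} ≤ ∑_{i: t_i ∈ R} x_{i,s} ≤ q̄_{R,s}, and assigning at least OPT students to regular schools. If y is an integral assignment such that for each type t and regular school s, ∑_{i: t_i=t} y_{i,s} lies between ⌊∑_{i: t_i=t} x_{i,s}⌋ and ⌈∑_{i: t_i=t} x_{i,s}⌉, and ∑_i y_{i,φ} ≤ ⌈∑_i x_{i,φ}⌉, then y violates each lower- and upper-bound quota by at most |T| (i.e., q̲_{R,s} − |T| ≤ ∑_{i: t_i∈R} y_{i,s} ≤ q̄_{R,s} + |T| for all s, R ∈ Z(s)) and y assigns at least ⌊OPT⌋ students to regular schools. -/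
open Finset in
/-- If `x` is a feasible fractional assignment (quotas `qlo ≤ · ≤ qhi` on each `R ∈ Z s`),
`OPT = ∑_i ∑_{s ≠ phi} x i s` is the number of students it assigns to regular schools, and
`a` is an integral assignment whose type-aggregates lie between the floors and ceilings of
those of `x` (and assigns at most `⌈∑_i x i phi⌉` students to the outside option), then `a`
violates every lower- and upper-bound quota by at most `|T|` and assigns at least `⌊OPT⌋`
students to regular schools. -/
theorem stmt2 {N M T : Type} [Fintype N] [Fintype M] [Fintype T]
    [DecidableEq M] [DecidableEq T]
    (phi : M) (tpy : N → T)
    (Z : M → Finset (Finset T)) (qlo qhi : M → Finset T → ℝ)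
    (hZphi : Z phi = ∅)
    (x : N → M → ℝ) (a : N → M)
    (hnn : ∀ i s, 0 ≤ x i s) (hrow : ∀ i, ∑ s, x i s = 1)
    (hq : ∀ s, ∀ R ∈ Z s,
      qlo s R ≤ ∑ i ∈ univ.filter (fun i => tpy i ∈ R), x i s ∧
      ∑ i ∈ univ.filter (fun i => tpy i ∈ R), x i s ≤ qhi s R)
    (hy : ∀ t : T, ∀ s : M, s ≠ phi →
      (⌊∑ i ∈ univ.filter (fun i => tpy i = t), x i s⌋ : ℝ) ≤
        (univ.filter (fun i => tpy i = t ∧ a i = s)).card ∧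
      ((univ.filter (fun i => tpy i = t ∧ a i = s)).card : ℝ) ≤
        ⌈∑ i ∈ univ.filter (fun i => tpy i = t), x i s⌉)
    (hyphi : ((univ.filter (fun i => a i = phi)).card : ℝ) ≤ ⌈∑ i, x i phi⌉) :
    (∀ s, ∀ R ∈ Z s,
      qlo s R - Fintype.card T ≤ ((univ.filter (fun i => tpy i ∈ R ∧ a i = s)).card : ℝ) ∧
      ((univ.filter (fun i => tpy i ∈ R ∧ a i = s)).card : ℝ) ≤ qhi s R + Fintype.card T) ∧
    (⌊∑ i, ∑ s ∈ univ.erase phi, x i s⌋ : ℝ) ≤ (univ.filter (fun i => a i ≠ phi)).card := by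
  have key : ∀ (f : N → ℝ) (R : Finset T),
      ∑ i ∈ univ.filter (fun i => tpy i ∈ R), f i
        = ∑ t ∈ R, ∑ i ∈ univ.filter (fun i => tpy i = t), f i := by
    intro f R
    simp only [Finset.sum_filter]
    rw [Finset.sum_comm]
    refine Finset.sum_congr rfl fun i _ => ?_
    simp [Finset.sum_ite_eq' R (tpy i)]
  constructor
  · intro s R hR
    have hs : s ≠ phi := by rintro rfl; simp [hZphi] at hR
    have hcard : ((univ.filter (fun i => tpy i ∈ R ∧ a i = s)).card : ℝ)
        = ∑ t ∈ R, ((univ.filter (fun i => tpy i = t ∧ a i = s)).card : ℝ) := by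
      have : (univ.filter (fun i => tpy i ∈ R ∧ a i = s)).card
          = ∑ t ∈ R, (univ.filter (fun i => tpy i = t ∧ a i = s)).card := by
        simp only [Finset.card_filter]
        rw [Finset.sum_comm]
        refine Finset.sum_congr rfl fun i _ => ?_
        by_cases h : a i = s <;> simp [h, Finset.sum_ite_eq' R (tpy i)]
      rw [this]; push_cast; ring
    have hRT : (R.card : ℝ) ≤ Fintype.card T := by
      exact_mod_cast Finset.card_le_card (Finset.subset_univ R)
    obtain ⟨hlo, hhi⟩ := hq s R hR
    rw [key (fun i => x i s) R] at hlo hhi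
    constructor
    · calc qlo s R - Fintype.card T
          ≤ (∑ t ∈ R, ∑ i ∈ univ.filter (fun i => tpy i = t), x i s) - R.card := by
            linarith
        _ = ∑ t ∈ R, ((∑ i ∈ univ.filter (fun i => tpy i = t), x i s) - 1) := by
            rw [Finset.sum_sub_distrib]; simp
        _ ≤ ∑ t ∈ R, ((univ.filter (fun i => tpy i = t ∧ a i = s)).card : ℝ) := by
            refine Finset.sum_le_sum fun t _ => ?_
            have h1 := (hy t s hs).1
            have h2 := Int.sub_one_lt_floor (∑ i ∈ univ.filter (fun i => tpy i = t), x i s)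
            linarith
        _ = _ := hcard.symm
    · calc ((univ.filter (fun i => tpy i ∈ R ∧ a i = s)).card : ℝ)
          = ∑ t ∈ R, ((univ.filter (fun i => tpy i = t ∧ a i = s)).card : ℝ) := hcard
        _ ≤ ∑ t ∈ R, ((∑ i ∈ univ.filter (fun i => tpy i = t), x i s) + 1) := by
            refine Finset.sum_le_sum fun t _ => ?_
            have h1 := (hy t s hs).2
            have h2 := Int.ceil_lt_add_one (∑ i ∈ univ.filter (fun i => tpy i = t), x i s)
            linarith
        _ = (∑ t ∈ R, ∑ i ∈ univ.filter (fun i => tpy i = t), x i s) + R.card := by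
            rw [Finset.sum_add_distrib]; simp
        _ ≤ qhi s R + Fintype.card T := by linarith
  · have hOPT : ∑ i, ∑ s ∈ univ.erase phi, x i s
        = (Fintype.card N : ℝ) - ∑ i, x i phi := by
      have h1 : ∀ i, ∑ s ∈ univ.erase phi, x i s = 1 - x i phi := by
        intro i
        rw [Finset.sum_erase_eq_sub (Finset.mem_univ phi), hrow i]
      rw [Finset.sum_congr rfl fun i _ => h1 i, Finset.sum_sub_distrib]
      simp [Finset.card_univ]
    have hfloor : ⌊∑ i, ∑ s ∈ univ.erase phi, x i s⌋
        = (Fintype.card N : ℤ) - ⌈∑ i, x i phi⌉ := by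
      rw [hOPT, sub_eq_neg_add]
      rw [show ((Fintype.card N : ℝ)) = ((Fintype.card N : ℤ) : ℝ) by push_cast; ring]
      rw [Int.floor_add_intCast, Int.floor_neg]
      ring
    have hsplit : (univ.filter (fun i => a i ≠ phi)).card
        = Fintype.card N - (univ.filter (fun i => a i = phi)).card := by
      have h := Finset.card_filter_add_card_filter_not (s := (univ : Finset N)) (p := fun i => a i = phi)
      simp only [Finset.card_univ] at h
      simp only [ne_eq]
      omega
    have hle : ((univ.filter (fun i => a i = phi)).card : ℝ) ≤ Fintype.card N := by
      exact_mod_cast Finset.card_filter_le _ _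
    rw [hfloor, hsplit]
    have : ((Fintype.card N - (univ.filter (fun i => a i = phi)).card : ℕ) : ℝ)
        = (Fintype.card N : ℝ) - (univ.filter (fun i => a i = phi)).card := by
      have : (univ.filter (fun i => a i = phi)).card ≤ Fintype.card N := by
        simpa [Finset.card_univ] using Finset.card_filter_le (univ : Finset N) (fun i => a i = phi)
      rw [Nat.cast_sub this]
    rw [this]
    push_cast
    linarith
end

section
/- Every optimal solution of the fractional assignment LP (maximizing the number of students at regular schools subject to distributional constraints) can be written as a convex combination of approximately feasible integral assignments, where an integral assignment is approximately feasible if it violates each lower- and upper-bound quota by at most |T| and assigns at least ⌊OPT⌋ students to regular schools. -/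
/-!
Round `x` through the Birkhoff–von Neumann theorem. Writing `x_{t,s}` for the mass of type-`t`
students at school `s`, open `⌈x_{t,s}⌉` unit slots for every pair `(t, s)` and pour that mass into
them greedily, so that every slot of a pair except the last one is full. Dummy rows fill the
remaining deficits, those at the outside option `φ` first; students and dummies against slots then
form a doubly stochastic matrix, a convex combination of bijections. In each bijection a student
sits in a slot of its own type and a dummy only in a slot that is not full, of which a pair has at
most one; so the number of students with type in `R` at `s` is within `|R| ≤ |T|` of
`∑_{t ∈ R} x_{t,s}`. The first `⌊deficit at φ⌋` dummies are confined to slots at `φ`, which leaves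
fewer than `∑_i x_{i,φ} + 1` students at `φ`, hence at least `⌊OPT⌋` at regular schools.
-/

open Finset

namespace FractionalAssignment

/-- The length of `[0, y) ∩ [r, r + 1)` when `0 ≤ y`. -/
noncomputable def unitOverlap (r : ℕ) (y : ℝ) : ℝ := min y (r + 1) - min y r

section unitOverlap

variable {r : ℕ} {y : ℝ}

lemma unitOverlap_mono (r : ℕ) : Monotone (unitOverlap r) := by
  intro a b hab
  simp only [unitOverlap, min_def]
  split_ifs <;> linarith

lemma unitOverlap_le_one : unitOverlap r y ≤ 1 := by
  simp only [unitOverlap, min_def]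
  split_ifs <;> linarith

lemma unitOverlap_zero : unitOverlap r 0 = 0 := by
  simp [unitOverlap, add_nonneg]

lemma unitOverlap_eq_one (h : (r : ℝ) + 1 ≤ y) : unitOverlap r y = 1 := by
  rw [unitOverlap, min_eq_right h, min_eq_right (by linarith)]
  ring

lemma lt_of_unitOverlap_lt_one (h : unitOverlap r y < 1) : y < r + 1 := by
  by_contra! hy
  exact h.ne (unitOverlap_eq_one hy)

lemma sum_range_unitOverlap (K : ℕ) (hy : 0 ≤ y) :
    ∑ r ∈ range K, unitOverlap r y = min y K := by
  simpa [unitOverlap, min_eq_right hy] using sum_range_sub (fun k : ℕ => min y (k : ℝ)) K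

lemma sum_fin_unitOverlap (K : ℕ) (hy : 0 ≤ y) : ∑ r : Fin K, unitOverlap r y = min y K := by
  rw [Fin.sum_univ_eq_sum_range (fun r => unitOverlap r y), sum_range_unitOverlap K hy]

lemma sum_fin_unitOverlap_sub {K : ℕ} {a b : ℝ} (ha : 0 ≤ a) (hab : a ≤ b) (hb : b ≤ K) :
    ∑ r : Fin K, (unitOverlap r b - unitOverlap r a) = b - a := by
  rw [sum_sub_distrib, sum_fin_unitOverlap K (ha.trans hab), sum_fin_unitOverlap K ha,
    min_eq_left hb, min_eq_left (hab.trans hb)]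

end unitOverlap

section greedyShare

variable {α : Type*} [Fintype α] {n : ℕ} (e : α ≃ Fin n) (m : α → ℝ)

noncomputable def prefixSum (k : ℕ) : ℝ := ∑ j with (e j : ℕ) < k, m j

lemma prefixSum_zero : prefixSum e m 0 = 0 := by simp [prefixSum]

lemma prefixSum_of_le {k : ℕ} (hk : n ≤ k) : prefixSum e m k = ∑ j, m j := by
  rw [prefixSum, filter_true_of_mem fun j _ => (e j).isLt.trans_le hk]

lemma prefixSum_succ_apply (i : α) :
    prefixSum e m (e i + 1) = prefixSum e m (e i) + m i := by
  classical
  have hsplit : univ.filter (fun j => (e j : ℕ) < e i + 1)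
      = insert i (univ.filter fun j => (e j : ℕ) < e i) := by
    ext j
    simp only [mem_filter, mem_univ, true_and, mem_insert, Nat.lt_succ_iff, le_iff_eq_or_lt,
      Fin.val_inj, e.apply_eq_iff_eq]
  rw [prefixSum, prefixSum, hsplit, sum_insert (by simp), add_comm]

variable {e m}

lemma prefixSum_nonneg (hm : ∀ j, 0 ≤ m j) (k : ℕ) : 0 ≤ prefixSum e m k :=
  sum_nonneg fun j _ => hm j

lemma prefixSum_le_sum (hm : ∀ j, 0 ≤ m j) (k : ℕ) : prefixSum e m k ≤ ∑ j, m j :=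
  sum_le_sum_of_subset_of_nonneg (filter_subset _ _) fun j _ _ => hm j

variable (e m)

/-- Lay the masses `m` end to end on `[0, ∑ m)` in the order `e`: `greedyShare e m i r` is the
part of item `i` that falls into `[r, r + 1)`. -/
noncomputable def greedyShare (i : α) (r : ℕ) : ℝ :=
  unitOverlap r (prefixSum e m (e i) + m i) - unitOverlap r (prefixSum e m (e i))

lemma sum_greedyShare_item (r : ℕ) : ∑ i, greedyShare e m i r = unitOverlap r (∑ j, m j) := by
  let F : ℕ → ℝ := fun k => unitOverlap r (prefixSum e m k)
  have htel : ∑ i, (F (e i + 1) - F (e i)) = F n - F 0 := by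
    rw [← e.symm.sum_comp]
    simp only [Equiv.apply_symm_apply]
    rw [Fin.sum_univ_eq_sum_range (fun k => F (k + 1) - F k) n, sum_range_sub]
  simp only [F, prefixSum_succ_apply, prefixSum_of_le e m le_rfl, prefixSum_zero,
    unitOverlap_zero, sub_zero] at htel
  exact htel

variable {e m}

lemma greedyShare_nonneg (hm : ∀ j, 0 ≤ m j) (i : α) (r : ℕ) : 0 ≤ greedyShare e m i r :=
  sub_nonneg.2 <| unitOverlap_mono r <| le_add_of_nonneg_right (hm i)

lemma sum_greedyShare_unit (hm : ∀ j, 0 ≤ m j) {K : ℕ} (hK : ∑ j, m j ≤ K) (i : α) :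
    ∑ r : Fin K, greedyShare e m i r = m i := by
  have hle : prefixSum e m (e i) + m i ≤ K :=
    prefixSum_succ_apply e m i ▸ (prefixSum_le_sum hm _).trans hK
  rw [← add_sub_cancel_left (prefixSum e m (e i)) (m i)]
  exact sum_fin_unitOverlap_sub (prefixSum_nonneg hm _) (le_add_of_nonneg_right (hm i)) hle

lemma greedyShare_eq_zero_of_eq_zero {i : α} (h : m i = 0) (r : ℕ) : greedyShare e m i r = 0 := by
  simp [greedyShare, h]

lemma greedyShare_eq_zero_of_le (hm : ∀ j, 0 ≤ m j) {i : α} {r : ℕ}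
    (h : (r : ℝ) + 1 ≤ prefixSum e m (e i)) : greedyShare e m i r = 0 := by
  rw [greedyShare, unitOverlap_eq_one h, unitOverlap_eq_one (by linarith [hm i]), sub_self]

end greedyShare

theorem exists_eq_sum_equiv {α β : Type*} [Fintype α] [Fintype β] [DecidableEq β]
    (D : α → β → ℝ) (h0 : ∀ a b, 0 ≤ D a b) (hrow : ∀ a, ∑ b, D a b = 1)
    (hcol : ∀ b, ∑ a, D a b = 1) :
    ∃ (k : ℕ) (w : Fin k → ℝ) (σ : Fin k → α ≃ β), (∀ l, 0 < w l) ∧ ∑ l, w l = 1 ∧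
      ∀ a b, D a b = ∑ l, w l * if σ l a = b then 1 else 0 := by
  classical
  have hcard : Fintype.card α = Fintype.card β := by
    have h := sum_comm (s := univ) (t := univ) (f := D)
    simp only [hrow, hcol, sum_const, card_univ, nsmul_eq_mul, mul_one] at h
    exact_mod_cast h
  obtain ⟨e⟩ := Fintype.card_eq.1 hcard
  have hDS : Matrix.of (fun b b' => D (e.symm b) b') ∈ doublyStochastic ℝ β := by
    refine mem_doublyStochastic_iff_sum.2 ⟨fun _ _ => h0 _ _, fun _ => hrow _, fun b' => ?_⟩
    simpa using (e.symm.sum_comp (fun a => D a b')).trans (hcol b')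
  obtain ⟨w, hw0, hw1, hwD⟩ := exists_eq_sum_perm_of_mem_doublyStochastic hDS
  set S : Finset (Equiv.Perm β) := {τ | 0 < w τ}
  have hsum_S : ∀ g : Equiv.Perm β → ℝ, (∀ τ, w τ = 0 → g τ = 0) →
      ∑ l, g (S.equivFin.symm l) = ∑ τ, g τ := by
    intro g hg
    rw [S.equivFin.symm.sum_comp (fun τ => g τ), sum_coe_sort S g]
    refine sum_subset (subset_univ S) fun τ _ hτ => hg τ ?_
    exact le_antisymm (by simpa [S] using hτ) (hw0 τ)
  refine ⟨#S, fun l => w (S.equivFin.symm l), fun l => e.trans (S.equivFin.symm l),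
    fun l => (mem_filter.1 (S.equivFin.symm l).2).2, ?_, fun a b => ?_⟩
  · rw [hsum_S w fun _ h => h, hw1]
  · have hS := hsum_S (fun τ => w τ * if τ (e a) = b then 1 else 0) fun τ h => by simp [h]
    refine Eq.trans ?_ hS.symm
    have h := congrFun (congrFun hwD (e a)) b
    simp only [Matrix.of_apply, Equiv.symm_apply_apply] at h
    simp [← h, Matrix.sum_apply, PEquiv.toMatrix_apply, Equiv.toPEquiv_apply, eq_comm]

lemma apply_pos_of_eq_sum_equiv {α β : Type*} [DecidableEq β] {k : ℕ} {w : Fin k → ℝ}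
    {σ : Fin k → α ≃ β} {D : α → β → ℝ} (hw : ∀ l, 0 < w l)
    (hD : ∀ a b, D a b = ∑ l, w l * if σ l a = b then 1 else 0) (l : Fin k) (a : α) :
    0 < D a (σ l a) := by
  rw [hD]
  refine (hw l).trans_le ?_
  simpa using single_le_sum (f := fun l' => w l' * if σ l' a = σ l a then (1 : ℝ) else 0)
    (fun l' _ => mul_nonneg (hw l').le (by split_ifs <;> norm_num)) (mem_univ l)

lemma sum_mem_eq_sum_equiv {α β : Type*} [Fintype β] [DecidableEq β] {k : ℕ} {w : Fin k → ℝ}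
    {σ : Fin k → α ≃ β} {D : α → β → ℝ}
    (hD : ∀ a b, D a b = ∑ l, w l * if σ l a = b then 1 else 0) (a : α) (B : Finset β) :
    ∑ b ∈ B, D a b = ∑ l, w l * if σ l a ∈ B then 1 else 0 := by
  simp_rw [hD, mul_ite, mul_one, mul_zero]
  rw [sum_comm]
  exact sum_congr rfl fun l _ => sum_ite_eq B (σ l a) fun _ => w l

lemma card_filter_inl_add_card_filter_inr {α β γ : Type*} [Fintype α] [Fintype β] [Fintype γ]
    [DecidableEq γ] (σ : α ⊕ β ≃ γ) (S : Finset γ) :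
    #{a | σ (.inl a) ∈ S} + #{b | σ (.inr b) ∈ S} = #S := by
  simp only [card_filter, ← Fintype.sum_sum_type (fun u => if σ u ∈ S then 1 else 0)]
  rw [σ.sum_comp (fun c => if c ∈ S then 1 else 0), ← card_filter, filter_mem_eq_inter,
    univ_inter]

lemma exists_equiv_fin_lt_of_not {α : Type*} [Fintype α] (p : α → Prop) [DecidablePred p] :
    ∃ (n : ℕ) (e : α ≃ Fin n), ∀ a b, p a → ¬ p b → e a < e b := by
  refine ⟨_, ((Equiv.sumCompl p).symm.trans
    (Equiv.sumCongr (Fintype.equivFin _) (Fintype.equivFin _))).trans finSumFinEquiv,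
    fun a b ha hb => ?_⟩
  simp only [Equiv.trans_apply, Equiv.sumCompl_symm_apply_of_pos ha,
    Equiv.sumCompl_symm_apply_of_neg hb, Equiv.sumCongr_apply, Sum.map_inl, Sum.map_inr,
    finSumFinEquiv_apply_left, finSumFinEquiv_apply_right, Fin.lt_def, Fin.val_castAdd,
    Fin.val_natAdd]
  exact Nat.lt_add_right _ (Fin.isLt _)

lemma sum_filter_fst_mem_sigma {ι β : Type*} {κ : ι → Type*} [Fintype ι] [DecidableEq ι]
    [∀ i, Fintype (κ i)] [AddCommMonoid β] (P : Finset ι) (f : Sigma κ → β) :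
    ∑ q with q.1 ∈ P, f q = ∑ p ∈ P, ∑ r, f ⟨p, r⟩ := by
  rw [← sum_sigma]
  congr 1
  ext q
  simp

section Rounding

variable {N M T : Type*} [Fintype N] [DecidableEq T] (tpy : N → T) (x : N → M → ℝ)

noncomputable def typeMass (t : T) (s : M) : ℝ := ∑ i with tpy i = t, x i s

noncomputable def slots (t : T) (s : M) : ℕ := ⌈typeMass tpy x t s⌉₊

abbrev Slot : Type _ := Σ p : T × M, Fin (slots tpy x p.1 p.2)

noncomputable def studentShare (i : N) (q : Slot tpy x) : ℝ :=
  greedyShare (Fintype.equivFin N) (fun j => if tpy j = q.1.1 then x j q.1.2 else 0) i q.2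

noncomputable def deficit (q : Slot tpy x) : ℝ := 1 - unitOverlap q.2 (typeMass tpy x q.1.1 q.1.2)

variable {tpy x}

lemma sum_typeMass (R : Finset T) (s : M) :
    ∑ t ∈ R, typeMass tpy x t s = ∑ i with tpy i ∈ R, x i s := by
  simp only [typeMass, sum_filter]
  rw [sum_comm]
  exact sum_congr rfl fun i _ => sum_ite_eq R (tpy i) fun _ => x i s

lemma deficit_nonneg (q : Slot tpy x) : 0 ≤ deficit tpy x q :=
  sub_nonneg.2 unitOverlap_le_one

lemma studentShare_eq_zero_of_ne {i : N} {q : Slot tpy x} (h : q.1.1 ≠ tpy i) :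
    studentShare tpy x i q = 0 :=
  greedyShare_eq_zero_of_eq_zero (m := fun j => if tpy j = q.1.1 then x j q.1.2 else 0)
    (if_neg (Ne.symm h)) _

lemma sum_studentShare_left (q : Slot tpy x) :
    ∑ i, studentShare tpy x i q = unitOverlap q.2 (typeMass tpy x q.1.1 q.1.2) := by
  unfold studentShare
  rw [sum_greedyShare_item, typeMass, sum_filter]

lemma val_add_one_eq_slots_of_deficit_pos {q : Slot tpy x} (h : 0 < deficit tpy x q) :
    (q.2 : ℕ) + 1 = slots tpy x q.1.1 q.1.2 := by
  have hlt := lt_of_unitOverlap_lt_one (sub_pos.1 h)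
  have hle : slots tpy x q.1.1 q.1.2 ≤ q.2 + 1 := Nat.ceil_le.2 (by exact_mod_cast hlt.le)
  have := q.2.isLt
  omega

lemma eq_of_deficit_pos {q q' : Slot tpy x} (h : 0 < deficit tpy x q)
    (h' : 0 < deficit tpy x q') (hq : q.1 = q'.1) : q = q' := by
  obtain ⟨p, r⟩ := q
  obtain ⟨p', r'⟩ := q'
  obtain rfl : p = p' := hq
  have hr := val_add_one_eq_slots_of_deficit_pos h
  have hr' := val_add_one_eq_slots_of_deficit_pos h'
  simp only [Sigma.mk.injEq, heq_eq_eq, true_and]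
  exact Fin.ext (by simp only at hr hr'; omega)

section

variable (hnn : ∀ i s, 0 ≤ x i s)
include hnn

lemma typeMass_nonneg (t : T) (s : M) : 0 ≤ typeMass tpy x t s :=
  sum_nonneg fun i _ => hnn i s

lemma slots_lt_typeMass_add_one (t : T) (s : M) : (slots tpy x t s : ℝ) < typeMass tpy x t s + 1 :=
  Nat.ceil_lt_add_one (typeMass_nonneg hnn t s)

lemma sum_unitOverlap_slots (t : T) (s : M) :
    ∑ r : Fin (slots tpy x t s), unitOverlap r (typeMass tpy x t s) = typeMass tpy x t s := by
  have h : typeMass tpy x t s ≤ slots tpy x t s := Nat.le_ceil _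
  rw [sum_fin_unitOverlap _ (typeMass_nonneg hnn t s), min_eq_left h]

lemma studentShare_nonneg (i : N) (q : Slot tpy x) : 0 ≤ studentShare tpy x i q :=
  greedyShare_nonneg (fun j => by split_ifs <;> simp [hnn]) i q.2

lemma sum_studentShare_slots (i : N) (p : T × M) :
    ∑ r, studentShare tpy x i ⟨p, r⟩ = if tpy i = p.1 then x i p.2 else 0 := by
  have hK : ∑ j, (if tpy j = p.1 then x j p.2 else 0) ≤ slots tpy x p.1 p.2 := by
    rw [← sum_filter]
    exact Nat.le_ceil _
  exact sum_greedyShare_unit (fun j => by split_ifs <;> simp [hnn]) hK i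

lemma sum_studentShare_right [Fintype M] [Fintype T] (hrow : ∀ i, ∑ s, x i s = 1) (i : N) :
    ∑ q, studentShare tpy x i q = 1 := by
  rw [Fintype.sum_sigma, sum_congr rfl fun p _ => sum_studentShare_slots hnn i p,
    Fintype.sum_prod_type]
  simp [hrow]

end

variable [Fintype M] [Fintype T]

variable (tpy x) in
noncomputable def numDummies : ℕ := Fintype.card (Slot tpy x) - Fintype.card N

variable (tpy x) in
/-- Students spread their mass over the slots of their type; the dummy rows fill the remaining
deficits greedily, in the order `e`. -/
noncomputable def roundingMatrix {n : ℕ} (e : Slot tpy x ≃ Fin n) :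
    N ⊕ Fin (numDummies tpy x) → Slot tpy x → ℝ :=
  Sum.elim (studentShare tpy x) fun j q => greedyShare e (deficit tpy x) q j

section

variable (hnn : ∀ i s, 0 ≤ x i s) (hrow : ∀ i, ∑ s, x i s = 1)
include hnn hrow

lemma sum_deficit : ∑ q, deficit tpy x q = Fintype.card (Slot tpy x) - Fintype.card N := by
  simp only [deficit, sum_sub_distrib, ← sum_studentShare_left]
  rw [sum_comm]
  simp [sum_studentShare_right hnn hrow]

lemma sum_deficit_eq_numDummies : ∑ q, deficit tpy x q = numDummies tpy x := by
  have hle : Fintype.card N ≤ Fintype.card (Slot tpy x) := by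
    have h : (0 : ℝ) ≤ ∑ q, deficit tpy x q := sum_nonneg fun q _ => deficit_nonneg q
    rw [sum_deficit hnn hrow, sub_nonneg] at h
    exact_mod_cast h
  rw [sum_deficit hnn hrow, numDummies, Nat.cast_sub hle]

variable {n : ℕ} (e : Slot tpy x ≃ Fin n)

omit hrow in
lemma roundingMatrix_nonneg (u : N ⊕ Fin (numDummies tpy x)) (q : Slot tpy x) :
    0 ≤ roundingMatrix tpy x e u q := by
  rcases u with i | j
  · exact studentShare_nonneg hnn i q
  · exact greedyShare_nonneg deficit_nonneg q j

lemma sum_roundingMatrix_row (u : N ⊕ Fin (numDummies tpy x)) :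
    ∑ q, roundingMatrix tpy x e u q = 1 := by
  rcases u with i | j
  · exact sum_studentShare_right hnn hrow i
  · simp only [roundingMatrix, Sum.elim_inr]
    rw [sum_greedyShare_item, sum_deficit_eq_numDummies hnn hrow]
    exact unitOverlap_eq_one (by exact_mod_cast j.isLt)

lemma sum_roundingMatrix_col (q : Slot tpy x) : ∑ u, roundingMatrix tpy x e u q = 1 := by
  simp only [Fintype.sum_sum_type, roundingMatrix, Sum.elim_inl, Sum.elim_inr]
  rw [sum_studentShare_left,
    sum_greedyShare_unit deficit_nonneg (sum_deficit_eq_numDummies hnn hrow).le, deficit]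
  ring

end

variable [DecidableEq M]

variable (tpy x) in
noncomputable def block (R : Finset T) (s : M) : Finset (Slot tpy x) := {q | q.1 ∈ R ×ˢ {s}}

@[simp]
lemma mem_block {R : Finset T} {s : M} {q : Slot tpy x} :
    q ∈ block tpy x R s ↔ q.1.1 ∈ R ∧ q.1.2 = s := by
  simp only [block, mem_filter, mem_univ, true_and, mem_product, mem_singleton]

lemma sum_block {β : Type*} [AddCommMonoid β] (f : Slot tpy x → β) (R : Finset T) (s : M) :
    ∑ q ∈ block tpy x R s, f q = ∑ t ∈ R, ∑ r, f ⟨(t, s), r⟩ := by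
  rw [block, sum_filter_fst_mem_sigma, sum_product]
  simp

lemma card_block (R : Finset T) (s : M) : #(block tpy x R s) = ∑ t ∈ R, slots tpy x t s := by
  rw [card_eq_sum_ones, sum_block]
  simp

section

variable (hnn : ∀ i s, 0 ≤ x i s)
include hnn

lemma sum_deficit_block (R : Finset T) (s : M) :
    ∑ q ∈ block tpy x R s, deficit tpy x q
      = ∑ t ∈ R, (slots tpy x t s : ℝ) - ∑ t ∈ R, typeMass tpy x t s := by
  rw [sum_block, ← sum_sub_distrib]
  refine sum_congr rfl fun t _ => ?_
  simp only [deficit, sum_sub_distrib, sum_const, card_univ, Fintype.card_fin, nsmul_eq_mul,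
    mul_one, sum_unitOverlap_slots hnn]

lemma sum_studentShare_block (i : N) (s : M) :
    ∑ q ∈ block tpy x univ s, studentShare tpy x i q = x i s := by
  rw [sum_block, sum_congr rfl fun t _ => sum_studentShare_slots hnn i (t, s)]
  simp

end

section Support

variable {n : ℕ} {e : Slot tpy x ≃ Fin n} {σ : N ⊕ Fin (numDummies tpy x) ≃ Slot tpy x}
  (hσ : ∀ u, 0 < roundingMatrix tpy x e u (σ u))
include hσ

omit [DecidableEq M] in
lemma type_slot_student (i : N) : (σ (.inl i)).1.1 = tpy i := by
  by_contra h
  exact (hσ (.inl i)).ne' (studentShare_eq_zero_of_ne h)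

omit [DecidableEq M] in
lemma deficit_slot_dummy_pos (j : Fin (numDummies tpy x)) : 0 < deficit tpy x (σ (.inr j)) :=
  (deficit_nonneg _).lt_of_ne fun h => (hσ (.inr j)).ne' (greedyShare_eq_zero_of_eq_zero h.symm _)

lemma school_slot_dummy_eq {phi : M}
    (he : ∀ q q' : Slot tpy x, q.1.2 = phi → q'.1.2 ≠ phi → e q < e q')
    {j : Fin (numDummies tpy x)}
    (hj : (j : ℝ) + 1 ≤ ∑ q ∈ block tpy x univ phi, deficit tpy x q) :
    (σ (.inr j)).1.2 = phi := by
  by_contra hne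
  refine (hσ (.inr j)).ne' (greedyShare_eq_zero_of_le deficit_nonneg (hj.trans ?_))
  refine sum_le_sum_of_subset_of_nonneg (fun q hq => ?_) fun q _ _ => deficit_nonneg q
  simp only [mem_block, mem_univ, true_and, mem_filter] at hq ⊢
  exact he _ _ hq hne

lemma card_students_add_card_dummies (R : Finset T) (s : M) :
    #{i | tpy i ∈ R ∧ (σ (.inl i)).1.2 = s} + #{j | σ (.inr j) ∈ block tpy x R s}
      = ∑ t ∈ R, slots tpy x t s := by
  rw [← card_block, ← card_filter_inl_add_card_filter_inr σ]
  congr 2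
  ext i
  simp [type_slot_student hσ i]

lemma card_dummies_le (R : Finset T) (s : M) : #{j | σ (.inr j) ∈ block tpy x R s} ≤ #R := by
  refine card_le_card_of_injOn (fun j => (σ (.inr j)).1.1) (fun j hj => ?_) fun j hj j' hj' h => ?_
  · simp only [mem_coe, mem_filter, mem_univ, true_and, mem_block] at hj
    exact hj.1
  · simp only [mem_coe, mem_filter, mem_univ, true_and, mem_block] at hj hj'
    have hq := eq_of_deficit_pos (deficit_slot_dummy_pos hσ j) (deficit_slot_dummy_pos hσ j')
      (Prod.ext h (hj.2.trans hj'.2.symm))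
    simpa using σ.injective hq

lemma card_school_bounds (hnn : ∀ i s, 0 ≤ x i s) (s : M) (R : Finset T) :
    (∑ i with tpy i ∈ R, x i s) - #R ≤ #{i | tpy i ∈ R ∧ (σ (.inl i)).1.2 = s} ∧
      (#{i | tpy i ∈ R ∧ (σ (.inl i)).1.2 = s} : ℝ) ≤ (∑ i with tpy i ∈ R, x i s) + #R := by
  have hcount : (#{i | tpy i ∈ R ∧ (σ (.inl i)).1.2 = s} : ℝ)
      + #{j | σ (.inr j) ∈ block tpy x R s} = ∑ t ∈ R, (slots tpy x t s : ℝ) := by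
    exact_mod_cast card_students_add_card_dummies hσ R s
  have hdummies : (#{j | σ (.inr j) ∈ block tpy x R s} : ℝ) ≤ #R := by
    exact_mod_cast card_dummies_le hσ R s
  have hslots_ge : ∑ t ∈ R, typeMass tpy x t s ≤ ∑ t ∈ R, (slots tpy x t s : ℝ) :=
    sum_le_sum fun t _ => Nat.le_ceil _
  have hslots_le : ∑ t ∈ R, (slots tpy x t s : ℝ) ≤ ∑ t ∈ R, typeMass tpy x t s + #R := by
    simpa [sum_add_distrib] using sum_le_sum fun t (_ : t ∈ R) =>
      (slots_lt_typeMass_add_one hnn t s).le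
  rw [← sum_typeMass]
  constructor <;> linarith [(#{j | σ (.inr j) ∈ block tpy x R s}).cast_nonneg (α := ℝ)]

section Outside

variable (hnn : ∀ i s, 0 ≤ x i s) (hrow : ∀ i, ∑ s, x i s = 1) {phi : M}
  (he : ∀ q q' : Slot tpy x, q.1.2 = phi → q'.1.2 ≠ phi → e q < e q')
include hnn hrow he

lemma floor_le_card_dummies_outside :
    ⌊∑ q ∈ block tpy x univ phi, deficit tpy x q⌋₊ ≤ #{j | σ (.inr j) ∈ block tpy x univ phi} := by
  set D := ∑ q ∈ block tpy x univ phi, deficit tpy x q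
  have hD : D ≤ numDummies tpy x :=
    (sum_le_sum_of_subset_of_nonneg (subset_univ _) fun q _ _ => deficit_nonneg q).trans_eq
      (sum_deficit_eq_numDummies hnn hrow)
  calc ⌊D⌋₊ = #{j : Fin (numDummies tpy x) | j < ⌊D⌋₊} := by
        rw [Fin.card_filter_val_lt, min_eq_right (Nat.floor_le_of_le hD)]
    _ ≤ _ := card_le_card fun j hj => by
        simp only [mem_filter, mem_univ, true_and, mem_block] at hj ⊢
        refine school_slot_dummy_eq hσ he ?_
        exact_mod_cast (Nat.le_floor_iff' (Nat.succ_ne_zero j)).1 hj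

lemma floor_le_card_school_ne :
    (⌊∑ i, ∑ s ∈ univ.erase phi, x i s⌋ : ℝ) ≤ #{i | (σ (.inl i)).1.2 ≠ phi} := by
  set c := #{i | (σ (.inl i)).1.2 = phi}
  set d := #{j | σ (.inr j) ∈ block tpy x univ phi}
  set S := ∑ t, (slots tpy x t phi : ℝ)
  set Φ := ∑ i, x i phi
  have hcd : (c : ℝ) + d = S := by
    simp only [S, ← Nat.cast_sum]
    exact_mod_cast by
      simpa only [mem_univ, true_and] using card_students_add_card_dummies hσ univ phi
  have hd : (⌊S - Φ⌋₊ : ℝ) ≤ d := by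
    exact_mod_cast by
      simpa only [sum_deficit_block hnn, sum_typeMass, mem_univ, filter_true] using
        floor_le_card_dummies_outside hσ hnn hrow he
  have hsplit : (c : ℝ) + #{i | (σ (.inl i)).1.2 ≠ phi} = Fintype.card N := by
    exact_mod_cast card_filter_add_card_filter_not _
  have houtside : ∑ i, ∑ s ∈ univ.erase phi, x i s = Fintype.card N - Φ := by
    simp [Φ, sum_erase_eq_sub, hrow, sum_sub_distrib]
  have key : ⌊(Fintype.card N : ℝ) - Φ⌋ ≤ (#{i | (σ (.inl i)).1.2 ≠ phi} : ℤ) := by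
    rw [Int.floor_le_iff]
    push_cast
    linarith [Nat.lt_floor_add_one (S - Φ)]
  rw [houtside]
  exact_mod_cast key

end Outside

end Support

variable (tpy) in
theorem exists_convex_comb_rounding (phi : M) (hnn : ∀ i s, 0 ≤ x i s)
    (hrow : ∀ i, ∑ s, x i s = 1) :
    ∃ (k : ℕ) (w : Fin k → ℝ) (a : Fin k → N → M),
      (∀ m, 0 ≤ w m) ∧ ∑ m, w m = 1 ∧
      (∀ i s, x i s = ∑ m, w m * if a m i = s then 1 else 0) ∧
      (∀ m s R, (∑ i with tpy i ∈ R, x i s) - #R ≤ #{i | tpy i ∈ R ∧ a m i = s} ∧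
        (#{i | tpy i ∈ R ∧ a m i = s} : ℝ) ≤ (∑ i with tpy i ∈ R, x i s) + #R) ∧
      ∀ m, (⌊∑ i, ∑ s ∈ univ.erase phi, x i s⌋ : ℝ) ≤ #{i | a m i ≠ phi} := by
  obtain ⟨n, e, he⟩ := exists_equiv_fin_lt_of_not fun q : Slot tpy x => q.1.2 = phi
  obtain ⟨k, w, σ, hw, hw1, hD⟩ := exists_eq_sum_equiv (roundingMatrix tpy x e)
    (roundingMatrix_nonneg hnn e) (sum_roundingMatrix_row hnn hrow e)
    (sum_roundingMatrix_col hnn hrow e)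
  have hσ := apply_pos_of_eq_sum_equiv hw hD
  refine ⟨k, w, fun l i => (σ l (.inl i)).1.2, fun l => (hw l).le, hw1, fun i s => ?_,
    fun l s R => card_school_bounds (hσ l) hnn s R,
    fun l => floor_le_card_school_ne (hσ l) hnn hrow he⟩
  rw [← sum_studentShare_block (T := T) hnn i s]
  simpa [roundingMatrix] using sum_mem_eq_sum_equiv hD (.inl i) (block tpy x univ s)

end Rounding

end FractionalAssignment

open Finset in
theorem stmt3_general {N M T : Type} [Fintype N] [Fintype M] [Fintype T]
    [DecidableEq M] [DecidableEq T]
    (phi : M) (tpy : N → T)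
    (Z : M → Finset (Finset T)) (qlo qhi : M → Finset T → ℝ)
    (x : N → M → ℝ)
    (hnn : ∀ i s, 0 ≤ x i s) (hrow : ∀ i, ∑ s, x i s = 1)
    (hq : ∀ s, ∀ R ∈ Z s,
      qlo s R ≤ ∑ i ∈ univ.filter (fun i => tpy i ∈ R), x i s ∧
      ∑ i ∈ univ.filter (fun i => tpy i ∈ R), x i s ≤ qhi s R) :
    ∃ (k : ℕ) (w : Fin k → ℝ) (a : Fin k → N → M),
      (∀ m, 0 ≤ w m) ∧ (∑ m, w m = 1) ∧
      -- the convex combination of the integral assignments is `x`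
      (∀ i s, x i s = ∑ m, w m * (if a m i = s then (1:ℝ) else 0)) ∧
      -- each integral assignment is approximately feasible
      (∀ m, ∀ s, ∀ R ∈ Z s,
        qlo s R - Fintype.card T ≤
          ((univ.filter (fun i => tpy i ∈ R ∧ a m i = s)).card : ℝ) ∧
        ((univ.filter (fun i => tpy i ∈ R ∧ a m i = s)).card : ℝ) ≤
          qhi s R + Fintype.card T) ∧
      (∀ m, (⌊∑ i, ∑ s ∈ univ.erase phi, x i s⌋ : ℝ) ≤
        (univ.filter (fun i => a m i ≠ phi)).card) := by
  obtain ⟨k, w, a, hw, hw1, hx, hbounds, houtside⟩ :=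
    FractionalAssignment.exists_convex_comb_rounding tpy phi hnn hrow
  refine ⟨k, w, a, hw, hw1, hx, fun m s R hR => ?_, houtside⟩
  have hRT : (#R : ℝ) ≤ Fintype.card T := by exact_mod_cast card_le_univ R
  obtain ⟨hlo, hhi⟩ := hq s R hR
  obtain ⟨h1, h2⟩ := hbounds m s R
  constructor <;> linarith

open Finset in
/-- **Lemma (implementation).**  Every optimal solution `x` of the fractional assignment LP
(maximize the number of students at regular schools subject to the distributional
constraints) is a convex combination of approximately feasible integral assignments:
integral assignments that violate each lower- and upper-bound quota by at most `|T|` and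
assign at least `⌊OPT⌋` students to regular schools. -/
theorem stmt3 {N M T : Type} [Fintype N] [Fintype M] [Fintype T]
    [DecidableEq M] [DecidableEq T]
    (phi : M) (tpy : N → T)
    (Z : M → Finset (Finset T)) (qlo qhi : M → Finset T → ℝ)
    (hZphi : Z phi = ∅)
    (x : N → M → ℝ)
    (hnn : ∀ i s, 0 ≤ x i s) (hrow : ∀ i, ∑ s, x i s = 1)
    (hq : ∀ s, ∀ R ∈ Z s,
      qlo s R ≤ ∑ i ∈ univ.filter (fun i => tpy i ∈ R), x i s ∧
      ∑ i ∈ univ.filter (fun i => tpy i ∈ R), x i s ≤ qhi s R)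
    -- `x` is optimal: no feasible assignment sends more students to regular schools
    (hopt : ∀ z : N → M → ℝ, (∀ i s, 0 ≤ z i s) → (∀ i, ∑ s, z i s = 1) →
      (∀ s, ∀ R ∈ Z s,
        qlo s R ≤ ∑ i ∈ univ.filter (fun i => tpy i ∈ R), z i s ∧
        ∑ i ∈ univ.filter (fun i => tpy i ∈ R), z i s ≤ qhi s R) →
      ∑ i, ∑ s ∈ univ.erase phi, z i s ≤ ∑ i, ∑ s ∈ univ.erase phi, x i s) :
    ∃ (k : ℕ) (w : Fin k → ℝ) (a : Fin k → N → M),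
      (∀ m, 0 ≤ w m) ∧ (∑ m, w m = 1) ∧
      -- the convex combination of the integral assignments is `x`
      (∀ i s, x i s = ∑ m, w m * (if a m i = s then (1:ℝ) else 0)) ∧
      -- each integral assignment is approximately feasible
      (∀ m, ∀ s, ∀ R ∈ Z s,
        qlo s R - Fintype.card T ≤
          ((univ.filter (fun i => tpy i ∈ R ∧ a m i = s)).card : ℝ) ∧
        ((univ.filter (fun i => tpy i ∈ R ∧ a m i = s)).card : ℝ) ≤
          qhi s R + Fintype.card T) ∧
      (∀ m, (⌊∑ i, ∑ s ∈ univ.erase phi, x i s⌋ : ℝ) ≤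
        (univ.filter (fun i => a m i ≠ phi)).card) :=
  stmt3_general phi tpy Z qlo qhi x hnn hrow hq
end

section
/- Consider a bipartite transportation polytope: variables y_{i,s} ≥ 0 for i in a finite set N and s in a finite set S, with ∑_s y_{i,s} = 1 for every i, and integer lower/upper bounds L_j ≤ ∑_{(i,s)∈E_j} y_{i,s} ≤ U_j for a laminar family of constraint sets E_j on the school side partitioning coordinates by (type, school) groups. If this polytope is nonempty, then it has an integral point. -/
/-!
Iterative rounding. Adding the rows `{i} × S` and the singletons to the sets `E j` turns the
constraints into two laminar families, and it suffices to move a real point, without leaving the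
floor-ceiling range of any constrained sum, until all its coordinates are integers.

While some coordinate is fractional, take the constrained sets with integral sum, cut down to the
fractional coordinates. In each laminar family their constraints are spanned by those of the
nonempty fibers (a member minus its proper submembers); fibers are disjoint, have integral sums,
and so contain at least two fractional coordinates each. Hence there are fewer fiber constraints
than fractional coordinates, except when both fiber families partition them, and then one
constraint is redundant. A nonzero direction in the common kernel moves the point until the first
moving constrained sum hits an integer; nothing crosses an integer on the way, and the number of
constrained sets with fractional sum drops.
-/

open Finset AddSubgroup

variable {α : Type*}

def IsLaminar (𝓛 : Finset (Finset α)) : Prop :=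
  ∀ X ∈ 𝓛, ∀ Y ∈ 𝓛, X ⊆ Y ∨ Y ⊆ X ∨ Disjoint X Y

theorem IsLaminar.mono {𝓛 𝓜 : Finset (Finset α)} (h : IsLaminar 𝓛) (h𝓜 : 𝓜 ⊆ 𝓛) : IsLaminar 𝓜 :=
  fun X hX Y hY => h X (h𝓜 hX) Y (h𝓜 hY)

theorem exists_ne_zero_forall_sum_eq_zero [Fintype α] (𝓖 : Finset (Finset α))
    (h𝓖 : #𝓖 < Fintype.card α) : ∃ d : α → ℝ, d ≠ 0 ∧ ∀ X ∈ 𝓖, ∑ p ∈ X, d p = 0 := by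
  let Φ : (α → ℝ) →ₗ[ℝ] (𝓖 → ℝ) := LinearMap.pi fun X => ∑ p ∈ X.1, LinearMap.proj p
  have hker : LinearMap.ker Φ ≠ ⊥ := LinearMap.ker_ne_bot_of_finrank_lt (by simpa using h𝓖)
  obtain ⟨d, hd, hd0⟩ := (Submodule.ne_bot_iff _).1 hker
  refine ⟨d, hd0, fun X hX => ?_⟩
  simpa [Φ] using congrFun (LinearMap.mem_ker.1 hd) ⟨X, hX⟩

/-- The time at which `c + t * δ`, started at `t = 0`, first meets an integer. -/
noncomputable def hitTime (c δ : ℝ) : ℝ :=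
  if 0 < δ then (⌈c⌉ - c) / δ else (⌊c⌋ - c) / δ

theorem hitTime_nonneg (c δ : ℝ) : 0 ≤ hitTime c δ := by
  unfold hitTime
  split_ifs with hδ
  · exact div_nonneg (sub_nonneg.2 (Int.le_ceil c)) hδ.le
  · exact div_nonneg_of_nonpos (sub_nonpos.2 (Int.floor_le c)) (not_lt.1 hδ)

theorem add_hitTime_mul_mem {c δ : ℝ} (hδ : δ ≠ 0) : c + hitTime c δ * δ ∈ zmultiples (1 : ℝ) := by
  unfold hitTime
  split_ifs
  · rw [div_mul_cancel₀ _ hδ, add_sub_cancel]; exact intCast_mem_zmultiples_one _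
  · rw [div_mul_cancel₀ _ hδ, add_sub_cancel]; exact intCast_mem_zmultiples_one _

theorem add_mul_mem_Icc_floor_ceil {c δ t : ℝ} (ht₀ : 0 ≤ t) (ht : t ≤ hitTime c δ) :
    c + t * δ ∈ Set.Icc (⌊c⌋ : ℝ) ⌈c⌉ := by
  rcases lt_trichotomy δ 0 with hδ | rfl | hδ
  · have hhit : hitTime c δ * δ = ⌊c⌋ - c := by
      rw [hitTime, if_neg (not_lt.2 hδ.le), div_mul_cancel₀ _ hδ.ne]
    constructor
    · nlinarith [mul_le_mul_of_nonpos_right ht hδ.le]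
    · nlinarith [Int.le_ceil c, mul_nonpos_of_nonneg_of_nonpos ht₀ hδ.le]
  · simpa using ⟨Int.floor_le c, Int.le_ceil c⟩
  · have hhit : hitTime c δ * δ = ⌈c⌉ - c := by
      rw [hitTime, if_pos hδ, div_mul_cancel₀ _ hδ.ne']
    constructor
    · nlinarith [Int.floor_le c, mul_nonneg ht₀ hδ.le]
    · nlinarith [mul_le_mul_of_nonneg_right ht hδ.le]

theorem exists_step_to_integer {ι : Type*} (s : Finset ι) (c δ : ι → ℝ)
    (hs : ∃ i ∈ s, δ i ≠ 0) :
    ∃ t : ℝ, (∀ i ∈ s, c i + t * δ i ∈ Set.Icc (⌊c i⌋ : ℝ) ⌈c i⌉) ∧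
      ∃ i ∈ s, δ i ≠ 0 ∧ c i + t * δ i ∈ zmultiples (1 : ℝ) := by
  obtain ⟨i₀, hi₀, hmin⟩ := (s.filter (δ · ≠ 0)).exists_min_image (fun i => hitTime (c i) (δ i))
    (by simpa [Finset.Nonempty] using hs)
  rw [mem_filter] at hi₀
  refine ⟨hitTime (c i₀) (δ i₀), fun i hi => ?_, i₀, hi₀.1, hi₀.2, add_hitTime_mul_mem hi₀.2⟩
  by_cases hδ : δ i = 0
  · simpa [hδ] using ⟨Int.floor_le (c i), Int.le_ceil (c i)⟩
  · exact add_mul_mem_Icc_floor_ceil (hitTime_nonneg _ _) (hmin i (mem_filter.2 ⟨hi, hδ⟩))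

open scoped Classical in
noncomputable def fractionalSets (𝓕 : Finset (Finset α)) (x : α → ℝ) : Finset (Finset α) :=
  𝓕.filter fun X => ∑ p ∈ X, x p ∉ zmultiples (1 : ℝ)

variable [DecidableEq α] {𝓛 : Finset (Finset α)} {X Y : Finset α}

theorem IsLaminar.image_filter (h : IsLaminar 𝓛) (q : α → Prop) [DecidablePred q] :
    IsLaminar (𝓛.image (·.filter q)) := by
  simp only [IsLaminar, mem_image]
  rintro _ ⟨X, hX, rfl⟩ _ ⟨Y, hY, rfl⟩
  rcases h X hX Y hY with hXY | hYX | hXY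
  · exact Or.inl (filter_subset_filter q hXY)
  · exact Or.inr (Or.inl (filter_subset_filter q hYX))
  · exact Or.inr (Or.inr (disjoint_filter_filter hXY))

def fiber (𝓛 : Finset (Finset α)) (X : Finset α) : Finset α :=
  X.filter fun p => ∀ Y ∈ 𝓛, p ∈ Y → X ⊆ Y

theorem fiber_subset : fiber 𝓛 X ⊆ X := filter_subset _ _

theorem disjoint_fiber (hX : X ∈ 𝓛) (hY : Y ∈ 𝓛) (hXY : X ≠ Y) :
    Disjoint (fiber 𝓛 X) (fiber 𝓛 Y) := by
  refine disjoint_left.2 fun p hpX hpY => hXY ?_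
  simp only [fiber, mem_filter] at hpX hpY
  exact (hpX.2 Y hY hpY.1).antisymm (hpY.2 X hX hpX.1)

theorem pairwiseDisjoint_fiber (X : Finset α) :
    ((𝓛.filter (· ⊆ X) : Finset (Finset α)) : Set (Finset α)).PairwiseDisjoint (fiber 𝓛) :=
  fun _ hY _ hZ hYZ => disjoint_fiber (mem_filter.1 hY).1 (mem_filter.1 hZ).1 hYZ

namespace IsLaminar

theorem biUnion_fiber (h : IsLaminar 𝓛) (hX : X ∈ 𝓛) :
    (𝓛.filter (· ⊆ X)).biUnion (fiber 𝓛) = X := by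
  refine (biUnion_subset.2 fun Y hY => fiber_subset.trans (mem_filter.1 hY).2).antisymm ?_
  intro p hp
  obtain ⟨Y, hY, hmin⟩ := (𝓛.filter (p ∈ ·)).exists_min_image card ⟨X, mem_filter.2 ⟨hX, hp⟩⟩
  rw [mem_filter] at hY
  have hYmin : ∀ Z ∈ 𝓛, p ∈ Z → Y ⊆ Z := by
    intro Z hZ hpZ
    rcases h Y hY.1 Z hZ with hYZ | hZY | hYZ
    · exact hYZ
    · exact (eq_of_subset_of_card_le hZY (hmin Z (mem_filter.2 ⟨hZ, hpZ⟩))).symm.subset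
    · exact absurd hpZ (disjoint_left.1 hYZ hY.2)
  exact mem_biUnion.2 ⟨Y, mem_filter.2 ⟨hY.1, hYmin X hX hp⟩, mem_filter.2 ⟨hY.2, hYmin⟩⟩

theorem sum_fiber {M : Type*} [AddCommMonoid M] (h : IsLaminar 𝓛) (hX : X ∈ 𝓛) (f : α → M) :
    ∑ Y ∈ 𝓛.filter (· ⊆ X), ∑ p ∈ fiber 𝓛 Y, f p = ∑ p ∈ X, f p := by
  rw [← sum_biUnion (pairwiseDisjoint_fiber X), h.biUnion_fiber hX]

theorem sum_fiber_mem {M : Type*} [AddCommGroup M] {H : AddSubgroup M} {f : α → M}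
    (h : IsLaminar 𝓛) (hf : ∀ X ∈ 𝓛, ∑ p ∈ X, f p ∈ H) (hX : X ∈ 𝓛) :
    ∑ p ∈ fiber 𝓛 X, f p ∈ H := by
  induction X using Finset.strongInduction with
  | H X ih =>
    have hXX : X ∈ 𝓛.filter (· ⊆ X) := mem_filter.2 ⟨hX, subset_rfl⟩
    have hsplit := h.sum_fiber hX f
    rw [← add_sum_erase _ _ hXX] at hsplit
    rw [eq_sub_of_add_eq hsplit]
    refine H.sub_mem (hf X hX) (H.sum_mem fun Y hY => ?_)
    obtain ⟨hYX, hY, hYsub⟩ : Y ≠ X ∧ Y ∈ 𝓛 ∧ Y ⊆ X := by simpa using hY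
    exact ih Y (ssubset_of_subset_of_ne hYsub hYX) hY

end IsLaminar

def fibers (𝓛 : Finset (Finset α)) : Finset (Finset α) :=
  (𝓛.image (fiber 𝓛)).filter Finset.Nonempty

theorem pairwiseDisjoint_fibers : (fibers 𝓛 : Set (Finset α)).PairwiseDisjoint id := by
  intro _ hY _ hZ hYZ
  simp only [fibers, mem_coe, mem_filter, mem_image] at hY hZ
  obtain ⟨⟨Y, hY, rfl⟩, -⟩ := hY
  obtain ⟨⟨Z, hZ, rfl⟩, -⟩ := hZ
  exact disjoint_fiber hY hZ fun h => hYZ (h ▸ rfl)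

theorem subset_of_mem_fibers {F : Finset α} (h𝓛F : ∀ X ∈ 𝓛, X ⊆ F) (hY : Y ∈ fibers 𝓛) : Y ⊆ F := by
  simp only [fibers, mem_filter, mem_image] at hY
  obtain ⟨⟨X, hX, rfl⟩, -⟩ := hY
  exact fiber_subset.trans (h𝓛F X hX)

namespace IsLaminar

theorem sum_eq_zero_of_fibers {M : Type*} [AddCommMonoid M] {f : α → M} (h : IsLaminar 𝓛)
    (hf : ∀ Y ∈ fibers 𝓛, ∑ p ∈ Y, f p = 0) (hX : X ∈ 𝓛) : ∑ p ∈ X, f p = 0 := by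
  rw [← h.sum_fiber hX]
  refine sum_eq_zero fun Y hY => ?_
  rcases (fiber 𝓛 Y).eq_empty_or_nonempty with hempty | hne
  · rw [hempty, sum_empty]
  · exact hf _ (mem_filter.2 ⟨mem_image_of_mem _ (mem_filter.1 hY).1, hne⟩)

theorem one_lt_card_of_mem_fibers {M : Type*} [AddCommGroup M] {H : AddSubgroup M} {f : α → M}
    (h : IsLaminar 𝓛) (hf : ∀ X ∈ 𝓛, ∑ p ∈ X, f p ∈ H) (hfX : ∀ X ∈ 𝓛, ∀ p ∈ X, f p ∉ H)
    (hY : Y ∈ fibers 𝓛) : 1 < #Y := by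
  simp only [fibers, mem_filter, mem_image] at hY
  obtain ⟨⟨X, hX, rfl⟩, hne⟩ := hY
  rcases hne.exists_eq_singleton_or_nontrivial with ⟨p, hp⟩ | hnt
  · have hfp := h.sum_fiber_mem hf hX
    rw [hp, sum_singleton] at hfp
    exact absurd hfp (hfX X hX p (fiber_subset (hp ▸ mem_singleton_self p)))
  · exact one_lt_card_iff_nontrivial.2 hnt

end IsLaminar

theorem two_mul_card_le_card_biUnion {𝓟 : Finset (Finset α)}
    (h𝓟 : (𝓟 : Set (Finset α)).PairwiseDisjoint id) (hcard : ∀ X ∈ 𝓟, 1 < #X) :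
    2 * #𝓟 ≤ #(𝓟.biUnion id) := by
  rw [card_biUnion h𝓟, mul_comm, ← smul_eq_mul]
  exact card_nsmul_le_sum _ _ _ hcard

theorem sum_eq_zero_of_biUnion_eq_biUnion {M : Type*} [AddCommMonoid M] {𝓟 𝓠 : Finset (Finset α)}
    (h𝓟 : (𝓟 : Set (Finset α)).PairwiseDisjoint id) (h𝓠 : (𝓠 : Set (Finset α)).PairwiseDisjoint id)
    (h𝓟𝓠 : 𝓟.biUnion id = 𝓠.biUnion id) {Y₀ : Finset α} (hY₀ : Y₀ ∈ 𝓠) {d : α → M}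
    (hd𝓟 : ∀ X ∈ 𝓟, ∑ p ∈ X, d p = 0) (hd𝓠 : ∀ Y ∈ 𝓠.erase Y₀, ∑ p ∈ Y, d p = 0) :
    ∑ p ∈ Y₀, d p = 0 := by
  have h𝓟sum := sum_biUnion (f := d) h𝓟
  rw [h𝓟𝓠, sum_biUnion h𝓠] at h𝓟sum
  simp only [id] at h𝓟sum
  rwa [sum_eq_zero hd𝓟, ← add_sum_erase _ _ hY₀, sum_eq_zero hd𝓠, add_zero] at h𝓟sum

variable [Fintype α]

theorem exists_ne_zero_supported_forall_sum_eq_zero (F : Finset α) (𝓖 : Finset (Finset α))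
    (h𝓖 : #𝓖 < #F) :
    ∃ d : α → ℝ, d ≠ 0 ∧ (∀ p ∉ F, d p = 0) ∧ ∀ X ∈ 𝓖, ∑ p ∈ X, d p = 0 := by
  have hcard : #(𝓖 ∪ Fᶜ.image singleton) < Fintype.card α := by
    calc #(𝓖 ∪ Fᶜ.image singleton) ≤ #𝓖 + #Fᶜ :=
          (card_union_le _ _).trans (by gcongr; exact card_image_le)
      _ < #F + #Fᶜ := by omega
      _ = Fintype.card α := card_add_card_compl F
  obtain ⟨d, hd0, hd⟩ := exists_ne_zero_forall_sum_eq_zero _ hcard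
  refine ⟨d, hd0, fun p hp => ?_, fun X hX => hd X (mem_union_left _ hX)⟩
  simpa using hd {p} (mem_union_right _ (mem_image_of_mem _ (mem_compl.2 hp)))

theorem exists_ne_zero_forall_sum_eq_zero_of_pairwiseDisjoint (F : Finset α) (hF : F.Nonempty)
    {𝓟 𝓠 : Finset (Finset α)} (h𝓟 : (𝓟 : Set (Finset α)).PairwiseDisjoint id)
    (h𝓠 : (𝓠 : Set (Finset α)).PairwiseDisjoint id)
    (h𝓟F : ∀ X ∈ 𝓟, X ⊆ F) (h𝓠F : ∀ X ∈ 𝓠, X ⊆ F)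
    (h𝓟card : ∀ X ∈ 𝓟, 1 < #X) (h𝓠card : ∀ X ∈ 𝓠, 1 < #X) :
    ∃ d : α → ℝ, d ≠ 0 ∧ (∀ p ∉ F, d p = 0) ∧ ∀ X ∈ 𝓟 ∪ 𝓠, ∑ p ∈ X, d p = 0 := by
  have hP := two_mul_card_le_card_biUnion h𝓟 h𝓟card
  have hQ := two_mul_card_le_card_biUnion h𝓠 h𝓠card
  have hPF : 𝓟.biUnion id ⊆ F := biUnion_subset.2 h𝓟F
  have hQF : 𝓠.biUnion id ⊆ F := biUnion_subset.2 h𝓠F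
  have hPF' := card_le_card hPF
  have hQF' := card_le_card hQF
  by_cases hcover : 𝓟.biUnion id = F ∧ 𝓠.biUnion id = F
  · obtain ⟨p, hp⟩ := hF
    rw [← hcover.2] at hp
    obtain ⟨Y₀, hY₀, -⟩ := mem_biUnion.1 hp
    obtain ⟨d, hd0, hdF, hd⟩ :=
      exists_ne_zero_supported_forall_sum_eq_zero F (𝓟 ∪ 𝓠.erase Y₀) <| by
        have := card_union_le 𝓟 (𝓠.erase Y₀)
        rw [card_erase_of_mem hY₀] at this
        have := card_pos.2 ⟨Y₀, hY₀⟩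
        omega
    have hdY₀ := sum_eq_zero_of_biUnion_eq_biUnion h𝓟 h𝓠 (hcover.1.trans hcover.2.symm) hY₀
      (fun X hX => hd X (mem_union_left _ hX)) (fun Y hY => hd Y (mem_union_right _ hY))
    refine ⟨d, hd0, hdF, fun X hX => ?_⟩
    rcases mem_union.1 hX with hX | hX
    · exact hd X (mem_union_left _ hX)
    · by_cases hXY₀ : X = Y₀
      · rwa [hXY₀]
      · exact hd X (mem_union_right _ (mem_erase.2 ⟨hXY₀, hX⟩))
  · refine exists_ne_zero_supported_forall_sum_eq_zero F (𝓟 ∪ 𝓠) ?_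
    have hlt : #(𝓟.biUnion id) < #F ∨ #(𝓠.biUnion id) < #F := by
      by_contra! hge
      exact hcover ⟨eq_of_subset_of_card_le hPF hge.1, eq_of_subset_of_card_le hQF hge.2⟩
    have := card_union_le 𝓟 𝓠
    omega

theorem IsLaminar.exists_ne_zero_supported_forall_sum_eq_zero {𝓐 𝓑 : Finset (Finset α)}
    (h𝓐 : IsLaminar 𝓐) (h𝓑 : IsLaminar 𝓑) {M : Type*} [AddCommGroup M] {H : AddSubgroup M}
    {f : α → M} (F : Finset α) (hF : F.Nonempty) (hfF : ∀ p ∈ F, f p ∉ H)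
    (h𝓐F : ∀ X ∈ 𝓐, X ⊆ F) (h𝓑F : ∀ X ∈ 𝓑, X ⊆ F)
    (h𝓐H : ∀ X ∈ 𝓐, ∑ p ∈ X, f p ∈ H) (h𝓑H : ∀ X ∈ 𝓑, ∑ p ∈ X, f p ∈ H) :
    ∃ d : α → ℝ, d ≠ 0 ∧ (∀ p ∉ F, d p = 0) ∧ ∀ X ∈ 𝓐 ∪ 𝓑, ∑ p ∈ X, d p = 0 := by
  obtain ⟨d, hd0, hdF, hd⟩ := exists_ne_zero_forall_sum_eq_zero_of_pairwiseDisjoint F hF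
    pairwiseDisjoint_fibers pairwiseDisjoint_fibers
    (fun _ => subset_of_mem_fibers h𝓐F) (fun _ => subset_of_mem_fibers h𝓑F)
    (fun _ => h𝓐.one_lt_card_of_mem_fibers h𝓐H fun X hX p hp => hfF p (h𝓐F X hX hp))
    (fun _ => h𝓑.one_lt_card_of_mem_fibers h𝓑H fun X hX p hp => hfF p (h𝓑F X hX hp))
  refine ⟨d, hd0, hdF, fun X hX => ?_⟩
  rcases mem_union.1 hX with hX | hX
  · exact h𝓐.sum_eq_zero_of_fibers (fun Y hY => hd Y (mem_union_left _ hY)) hX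
  · exact h𝓑.sum_eq_zero_of_fibers (fun Y hY => hd Y (mem_union_right _ hY)) hX

theorem IsLaminar.exists_ne_zero_sum_eq_zero_of_sum_mem {𝓐 𝓑 : Finset (Finset α)}
    (h𝓐 : IsLaminar 𝓐) (h𝓑 : IsLaminar 𝓑) {M : Type*} [AddCommGroup M] {H : AddSubgroup M}
    {f : α → M} (hf : ∃ p, f p ∉ H) :
    ∃ d : α → ℝ, d ≠ 0 ∧ (∀ p, f p ∈ H → d p = 0) ∧
      ∀ X ∈ 𝓐 ∪ 𝓑, ∑ p ∈ X, f p ∈ H → ∑ p ∈ X, d p = 0 := by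
  classical
  set frac : α → Prop := fun p => f p ∉ H
  set tight : Finset (Finset α) → Finset (Finset α) :=
    fun 𝓛 => (𝓛.filter fun X => ∑ p ∈ X, f p ∈ H).image (·.filter frac)
  have htight : ∀ 𝓛 : Finset (Finset α), IsLaminar 𝓛 → IsLaminar (tight 𝓛) :=
    fun 𝓛 h => (h.mono (filter_subset _ _)).image_filter frac
  have htight_sub : ∀ 𝓛, ∀ X ∈ tight 𝓛, X ⊆ univ.filter frac := by
    intro 𝓛 X hX
    obtain ⟨Y, -, rfl⟩ := mem_image.1 hX
    exact filter_subset_filter _ (subset_univ Y)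
  have htight_mem : ∀ 𝓛, ∀ X ∈ tight 𝓛, ∑ p ∈ X, f p ∈ H := by
    intro 𝓛 X hX
    obtain ⟨Y, hY, rfl⟩ := mem_image.1 hX
    rw [eq_sub_of_add_eq (sum_filter_add_sum_filter_not Y frac f)]
    exact H.sub_mem (mem_filter.1 hY).2 (H.sum_mem fun p hp => not_not.1 (mem_filter.1 hp).2)
  obtain ⟨p, hp⟩ := hf
  obtain ⟨d, hd0, hdF, hd⟩ := (htight 𝓐 h𝓐).exists_ne_zero_supported_forall_sum_eq_zero
    (htight 𝓑 h𝓑) _ ⟨p, mem_filter.2 ⟨mem_univ p, hp⟩⟩ (fun p hp => (mem_filter.1 hp).2)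
    (htight_sub 𝓐) (htight_sub 𝓑) (htight_mem 𝓐) (htight_mem 𝓑)
  refine ⟨d, hd0, fun p hp => hdF p fun hp' => (mem_filter.1 hp').2 hp, fun X hX hXH => ?_⟩
  rw [← sum_filter_of_ne fun p _ hp => by simpa using mt (hdF p) hp]
  refine hd _ ?_
  rcases mem_union.1 hX with hX | hX
  · exact mem_union_left _ (mem_image_of_mem _ (mem_filter.2 ⟨hX, hXH⟩))
  · exact mem_union_right _ (mem_image_of_mem _ (mem_filter.2 ⟨hX, hXH⟩))

theorem exists_fractionalSets_ssubset {𝓐 𝓑 : Finset (Finset α)} (h𝓐 : IsLaminar 𝓐)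
    (h𝓑 : IsLaminar 𝓑) (hsingle : ∀ p, {p} ∈ 𝓑) (x : α → ℝ)
    (hx : (fractionalSets (𝓐 ∪ 𝓑) x).Nonempty) :
    ∃ x' : α → ℝ, fractionalSets (𝓐 ∪ 𝓑) x' ⊂ fractionalSets (𝓐 ∪ 𝓑) x ∧
      ∀ X ∈ 𝓐 ∪ 𝓑, ∑ p ∈ X, x' p ∈ Set.Icc (⌊∑ p ∈ X, x p⌋ : ℝ) ⌈∑ p ∈ X, x p⌉ := by
  obtain ⟨X₀, hX₀⟩ := hx
  have hfrac : ∃ p, x p ∉ zmultiples (1 : ℝ) := by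
    by_contra! hint
    exact (mem_filter.1 hX₀).2 (sum_mem fun p _ => hint p)
  obtain ⟨d, hd0, -, hd⟩ := h𝓐.exists_ne_zero_sum_eq_zero_of_sum_mem h𝓑 hfrac
  obtain ⟨p₀, hp₀⟩ := Function.ne_iff.1 hd0
  obtain ⟨t, hIcc, X₁, hX₁, hδX₁, hX₁int⟩ :=
    exists_step_to_integer (𝓐 ∪ 𝓑) (fun X => ∑ p ∈ X, x p) (fun X => ∑ p ∈ X, d p)
      ⟨{p₀}, mem_union_right _ (hsingle p₀), by simpa using hp₀⟩
  have hsum : ∀ X : Finset α, ∑ p ∈ X, (x p + t * d p) = ∑ p ∈ X, x p + t * ∑ p ∈ X, d p :=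
    fun X => by rw [sum_add_distrib, mul_sum]
  refine ⟨fun p => x p + t * d p, ⟨fun X hX => ?_, fun hsub => ?_⟩,
    fun X hX => hsum X ▸ hIcc X hX⟩
  · obtain ⟨hX, hXfrac⟩ := mem_filter.1 hX
    refine mem_filter.2 ⟨hX, fun hXint => hXfrac ?_⟩
    rwa [hsum, hd X hX hXint, mul_zero, add_zero]
  · have hX₁frac : X₁ ∈ fractionalSets (𝓐 ∪ 𝓑) x :=
      mem_filter.2 ⟨hX₁, fun hint => hδX₁ (hd X₁ hX₁ hint)⟩
    exact (mem_filter.1 (hsub hX₁frac)).2 (hsum X₁ ▸ hX₁int)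

theorem exists_int_rounding {𝓐 𝓑 : Finset (Finset α)} (h𝓐 : IsLaminar 𝓐) (h𝓑 : IsLaminar 𝓑)
    (hsingle : ∀ p, {p} ∈ 𝓑) (x : α → ℝ) :
    ∃ z : α → ℤ, ∀ X ∈ 𝓐 ∪ 𝓑, ⌊∑ p ∈ X, x p⌋ ≤ ∑ p ∈ X, z p ∧ ∑ p ∈ X, z p ≤ ⌈∑ p ∈ X, x p⌉ := by
  induction hn : #(fractionalSets (𝓐 ∪ 𝓑) x) using Nat.strong_induction_on generalizing x with
  | _ n ih =>
  rcases (fractionalSets (𝓐 ∪ 𝓑) x).eq_empty_or_nonempty with hx | hx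
  · have hint : ∀ p, ∃ k : ℤ, (k : ℝ) = x p := fun p => by
      by_contra hp
      have : {p} ∈ fractionalSets (𝓐 ∪ 𝓑) x :=
        mem_filter.2 ⟨mem_union_right _ (hsingle p), by simpa [mem_zmultiples_iff] using hp⟩
      simp [hx] at this
    choose z hz using hint
    refine ⟨z, fun X _ => ?_⟩
    have hcast : ∑ p ∈ X, x p = ((∑ p ∈ X, z p : ℤ) : ℝ) := by push_cast [hz]; rfl
    rw [hcast, Int.floor_intCast, Int.ceil_intCast]
    exact ⟨le_rfl, le_rfl⟩
  · obtain ⟨x', hx', hIcc⟩ := exists_fractionalSets_ssubset h𝓐 h𝓑 hsingle x hx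
    obtain ⟨z, hz⟩ := ih _ (hn ▸ card_lt_card hx') x' rfl
    refine ⟨z, fun X hX => ⟨?_, ?_⟩⟩
    · exact (Int.le_floor.2 (hIcc X hX).1).trans (hz X hX).1
    · exact (hz X hX).2.trans (Int.ceil_le.2 (hIcc X hX).2)

theorem IsLaminar.union_image_singleton {𝓛 : Finset (Finset α)} (h : IsLaminar 𝓛) :
    IsLaminar (𝓛 ∪ univ.image singleton) := by
  have hsingle : ∀ (p : α) (X : Finset α), {p} ⊆ X ∨ Disjoint {p} X := fun p X => by
    by_cases hp : p ∈ X <;> simp [hp]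
  intro X hX Y hY
  simp only [mem_union, mem_image, mem_univ, true_and] at hX hY
  rcases hX with hX | ⟨p, rfl⟩ <;> rcases hY with hY | ⟨q, rfl⟩
  · exact h X hX Y hY
  · rcases hsingle q X with hq | hq
    · exact Or.inr (Or.inl hq)
    · exact Or.inr (Or.inr hq.symm)
  · exact (hsingle p Y).elim Or.inl (Or.inr ∘ Or.inr)
  · exact (hsingle p {q}).elim Or.inl (Or.inr ∘ Or.inr)

theorem isLaminar_image_rows (N S : Type*) [Fintype N] [Fintype S] [DecidableEq N]
    [DecidableEq S] : IsLaminar (univ.image fun i : N => ({i} ×ˢ univ : Finset (N × S))) := by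
  simp only [IsLaminar, mem_image, mem_univ, true_and]
  rintro _ ⟨i, rfl⟩ _ ⟨i', rfl⟩
  by_cases hii' : i = i'
  · exact Or.inl (hii' ▸ subset_rfl)
  · exact Or.inr (Or.inr (disjoint_product.2 (Or.inl (disjoint_singleton.2 hii'))))

theorem exists_eq_ite_of_sum_eq_one {S : Type*} [Fintype S] [DecidableEq S] {f : S → ℤ}
    (hf : ∀ s, 0 ≤ f s) (hsum : ∑ s, f s = 1) : ∃ a, ∀ s, f s = if a = s then 1 else 0 := by
  obtain ⟨a, -, ha⟩ := exists_ne_zero_of_sum_ne_zero (hsum ▸ one_ne_zero : ∑ s, f s ≠ 0)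
  have hsplit := add_sum_erase univ f (mem_univ a)
  have hrest := sum_nonneg fun s (_ : s ∈ univ.erase a) => hf s
  have hfa : f a = 1 := by have := hf a; omega
  have hzero := (sum_eq_zero_iff_of_nonneg fun s _ => hf s).1
    (by omega : ∑ s ∈ univ.erase a, f s = 0)
  refine ⟨a, fun s => ?_⟩
  split_ifs with has
  · exact has ▸ hfa
  · exact hzero s (mem_erase.2 ⟨Ne.symm has, mem_univ s⟩)

open Finset in
theorem stmt4_general {N S J : Type} [Fintype N] [Fintype S]
    [DecidableEq S]
    (E : J → Finset (N × S)) (L U : J → ℤ)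
    (hlam : ∀ j j', E j ⊆ E j' ∨ E j' ⊆ E j ∨ Disjoint (E j) (E j'))
    (y : N → S → ℝ)
    (hnn : ∀ i s, 0 ≤ y i s) (hrow : ∀ i, ∑ s, y i s = 1)
    (hcon : ∀ j, (L j : ℝ) ≤ ∑ p ∈ E j, y p.1 p.2 ∧ ∑ p ∈ E j, y p.1 p.2 ≤ U j) :
    ∃ a : N → S, ∀ j,
      (L j : ℝ) ≤ ∑ p ∈ E j, (if a p.1 = p.2 then (1:ℝ) else 0) ∧
      ∑ p ∈ E j, (if a p.1 = p.2 then (1:ℝ) else 0) ≤ U j := by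
  classical
  have h𝓔 : IsLaminar (univ.filter (· ∈ Set.range E)) := by
    simp only [IsLaminar, mem_filter, mem_univ, true_and]
    rintro _ ⟨j, rfl⟩ _ ⟨j', rfl⟩
    exact hlam j j'
  obtain ⟨z, hz⟩ := exists_int_rounding (isLaminar_image_rows N S) h𝓔.union_image_singleton
    (fun p => mem_union_right _ (mem_image_of_mem _ (mem_univ p))) (Function.uncurry y)
  have hz_nonneg : ∀ p, 0 ≤ z p := fun p => by
    have := (hz {p} (mem_union_right _ (mem_union_right _ (mem_image_of_mem _ (mem_univ p))))).1
    rw [sum_singleton, sum_singleton] at this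
    exact (Int.floor_nonneg.2 (hnn p.1 p.2)).trans this
  have hz_row : ∀ i, ∑ s, z (i, s) = 1 := fun i => by
    have := hz ({i} ×ˢ univ) (mem_union_left _ (mem_image_of_mem _ (mem_univ i)))
    simp only [sum_product, sum_singleton, Function.uncurry_apply_pair, hrow, Int.floor_one,
      Int.ceil_one] at this
    exact le_antisymm this.2 this.1
  choose a ha using fun i => exists_eq_ite_of_sum_eq_one (fun s => hz_nonneg (i, s)) (hz_row i)
  refine ⟨a, fun j => ?_⟩
  have hE : ∑ p ∈ E j, (if a p.1 = p.2 then (1 : ℝ) else 0) = ((∑ p ∈ E j, z p : ℤ) : ℝ) := by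
    push_cast [ha]; rfl
  obtain ⟨hlo, hhi⟩ :=
    hz (E j) (mem_union_right _ (mem_union_left _ (mem_filter.2 ⟨mem_univ _, j, rfl⟩)))
  rw [hE]
  exact ⟨mod_cast (Int.le_floor.2 (hcon j).1).trans hlo,
    mod_cast hhi.trans (Int.ceil_le.2 (hcon j).2)⟩

open Finset in
/-- **Laminar transportation polytopes have integral points.**  Consider variables
`y i s ≥ 0` (`i ∈ N`, `s ∈ S`) with unit row sums, together with integer lower/upper
bounds `L j ≤ ∑_{(i,s) ∈ E j} y i s ≤ U j` for a laminar family of constraint sets `E j`.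
If this polytope is nonempty then it contains an integral point, i.e. a point given by an
assignment `a : N → S`. -/
theorem stmt4 {N S J : Type} [Fintype N] [Fintype S] [Fintype J]
    [DecidableEq N] [DecidableEq S]
    (E : J → Finset (N × S)) (L U : J → ℤ)
    (hlam : ∀ j j', E j ⊆ E j' ∨ E j' ⊆ E j ∨ Disjoint (E j) (E j'))
    (y : N → S → ℝ)
    (hnn : ∀ i s, 0 ≤ y i s) (hrow : ∀ i, ∑ s, y i s = 1)
    (hcon : ∀ j, (L j : ℝ) ≤ ∑ p ∈ E j, y p.1 p.2 ∧ ∑ p ∈ E j, y p.1 p.2 ≤ U j) :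
    ∃ a : N → S, ∀ j,
      (L j : ℝ) ≤ ∑ p ∈ E j, (if a p.1 = p.2 then (1:ℝ) else 0) ∧
      ∑ p ∈ E j, (if a p.1 = p.2 then (1:ℝ) else 0) ≤ U j :=
  stmt4_general E L U hlam y hnn hrow hcon
end

section
/- In a laminar assignment problem with integer quotas, the serial dictatorship with dynamic menus algorithm never partially assigns any student (i.e., at every assignment step, for each type t and school s, f(t,s) is either 0 or at least 1), and hence it outputs an integral assignment feasible with respect to the original quotas q with Δ ≡ 0. -/
/-!
Both parts rest on the integrality of LP1 for laminar data: from any feasible `x` one reaches an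
integral feasible point without decreasing a given linear objective. This covers LP2 as well: with
`Δ ≡ 0` and integral `y` it is an instance of LP1 with residual quotas, its objective bound
becoming an upper quota on the column of `phi` (the family stays laminar because `Z phi = ∅`).
So an integral point of LP1 attains `OPT`, and once an LP2-feasible `x` has `x t s > 0`, some
integral LP2-feasible point has entry `≥ 1` at `(t, s)`.

For integrality, regard the constraint sets of LP1 as two laminar families of subsets of
`T × M`: the rows, and the sets `R × {s}`. Let `x` have fractional entries `F`. In each family,
every set with integral `x`-sum splits its fractional entries into blocks (those entries lying in
no smaller set with integral sum); each block has integral `x`-sum, hence at least two entries.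
Two disjoint families of blocks of size `≥ 2` inside `F` impose at most `|F|` independent
equations, with a dependency when there are exactly `|F|` of them, so some `D ≠ 0` supported on
`F` sums to zero over every block, hence over every constraint set with integral sum. Moving `x`
along `±D` until one more entry or constraint sum becomes integral preserves feasibility and the
objective, and strictly shrinks the set of fractional entries and constraint sums.
-/

open Finset in
/-- Feasibility for the original fractional assignment LP (LP1). -/
def LP1Feas {T M : Type} [Fintype T] [Fintype M]
    (Z : M → Finset (Finset T)) (qlo qhi : M → Finset T → ℝ)
    (C : T → ℝ) (x : T → M → ℝ) : Prop :=
  (∀ t s, 0 ≤ x t s) ∧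
  (∀ s, ∀ R ∈ Z s, ∑ t ∈ R, x t s ≤ qhi s R) ∧
  (∀ s, ∀ R ∈ Z s, qlo s R ≤ ∑ t ∈ R, x t s) ∧
  (∀ t, ∑ s, x t s = C t)

open Finset in
/-- Feasibility for the auxiliary LP (LP2) with current data `(y, Δ)`. -/
def LP2Feas {T M : Type} [Fintype T] [Fintype M] [DecidableEq M]
    (phi : M) (Z : M → Finset (Finset T)) (qlo qhi : M → Finset T → ℝ)
    (C : T → ℝ) (OPT : ℝ) (y Δ : T → M → ℝ) (x : T → M → ℝ) : Prop :=
  (∀ t s, 0 ≤ x t s) ∧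
  (OPT ≤ (∑ t, ∑ s ∈ univ.erase phi, x t s) + ∑ s ∈ univ.erase phi, ∑ t, y t s) ∧
  (∀ s, ∀ R ∈ Z s, (∑ t ∈ R, x t s) + (∑ t ∈ R, y t s) ≤ qhi s R + ∑ t ∈ R, Δ t s) ∧
  (∀ s, ∀ R ∈ Z s, qlo s R + (∑ t ∈ R, Δ t s) ≤ (∑ t ∈ R, x t s) + ∑ t ∈ R, y t s) ∧
  (∀ t, (∑ s, x t s) + ∑ s, y t s = C t)

namespace LaminarLP

open Finset

-- Integrality as membership in an additive subgroup, hence closed under sums and differences.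
abbrev intLattice : AddSubgroup ℝ := (Int.castAddHom ℝ).range

lemma floor_lt_of_notMem_intLattice {v : ℝ} (hv : v ∉ intLattice) : (⌊v⌋ : ℝ) < v :=
  Int.floor_lt_self_iff.2 hv

lemma lt_ceil_of_notMem_intLattice {v : ℝ} (hv : v ∉ intLattice) : v < ⌈v⌉ :=
  (Int.le_ceil v).lt_of_ne fun h => hv ⟨⌈v⌉, h.symm⟩

lemma exists_hitting_time {v δ : ℝ} (hv : v ∉ intLattice) (hδ : δ ≠ 0) :
    ∃ τ > 0, v + τ * δ ∈ intLattice ∧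
      ∀ ε ∈ Set.Icc 0 τ, (⌊v⌋ : ℝ) ≤ v + ε * δ ∧ v + ε * δ ≤ ⌈v⌉ := by
  have hfl := floor_lt_of_notMem_intLattice hv
  have hce := lt_ceil_of_notMem_intLattice hv
  rcases hδ.lt_or_gt with hneg | hpos
  · refine ⟨(⌊v⌋ - v) / δ, div_pos_of_neg_of_neg (by linarith) hneg,
      ⟨⌊v⌋, by simp [div_mul_cancel₀ _ hδ]⟩, fun ε ⟨hε0, hετ⟩ => ⟨?_, ?_⟩⟩
    · have := mul_le_mul_of_nonpos_right hετ hneg.le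
      rw [div_mul_cancel₀ _ hδ] at this
      linarith
    · nlinarith
  · refine ⟨(⌈v⌉ - v) / δ, div_pos (by linarith) hpos,
      ⟨⌈v⌉, by simp [div_mul_cancel₀ _ hδ]⟩, fun ε ⟨hε0, hετ⟩ => ⟨?_, ?_⟩⟩
    · nlinarith
    · have := mul_le_mul_of_nonneg_right hετ hpos.le
      rw [div_mul_cancel₀ _ hδ] at this
      linarith

lemma exists_common_step {κ : Type*} {K : Finset κ} (hK : K.Nonempty) {v δ : κ → ℝ}
    (hv : ∀ k ∈ K, v k ∉ intLattice) (hδ : ∀ k ∈ K, δ k ≠ 0) :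
    ∃ ε > 0, (∀ k ∈ K, (⌊v k⌋ : ℝ) ≤ v k + ε * δ k ∧ v k + ε * δ k ≤ ⌈v k⌉) ∧
      ∃ k ∈ K, v k + ε * δ k ∈ intLattice := by
  choose! τ hτpos hτint hτbetween using fun k hk => exists_hitting_time (hv k hk) (hδ k hk)
  obtain ⟨k₀, hk₀, hmin⟩ := K.exists_min_image τ hK
  exact ⟨τ k₀, hτpos k₀ hk₀,
    fun k hk => hτbetween k hk _ ⟨(hτpos k₀ hk₀).le, hmin k hk⟩, k₀, hk₀, hτint k₀ hk₀⟩

lemma sSup_notMem_Ioo_zero_one {V : Set ℝ} (hV : ∀ a ∈ V, ∃ n : ℤ, (n : ℝ) ∈ V ∧ a ≤ n) :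
    sSup V ∉ Set.Ioo 0 1 := by
  rintro ⟨h0, h1⟩
  have hbdd : BddAbove V := by
    by_contra h
    rw [Real.sSup_of_not_bddAbove h] at h0
    exact h0.false
  have hne : V.Nonempty := by
    by_contra h
    rw [Set.not_nonempty_iff_eq_empty.1 h, Real.sSup_empty] at h0
    exact h0.false
  obtain ⟨a, ha, ha0⟩ := exists_lt_of_lt_csSup hne h0
  obtain ⟨n, hn, han⟩ := hV a ha
  have hn1 : (1 : ℝ) ≤ n := by exact_mod_cast (show (0 : ℤ) < n by exact_mod_cast ha0.trans_le han)
  linarith [le_csSup hbdd hn]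

variable {E : Type*}

def IsLaminar (𝓛 : Set (Finset E)) : Prop :=
  𝓛.Pairwise fun A B => A ⊆ B ∨ B ⊆ A ∨ Disjoint A B

section Blocks

variable [DecidableEq E]

variable (𝓘 : Finset (Finset E)) (F : Finset E)

def block (A : Finset E) : Finset E :=
  (A ∩ F).filter fun e => ∀ B ∈ 𝓘, B ⊂ A → e ∉ B

def blocks : Finset (Finset E) := (𝓘.image (block 𝓘 F)).filter (·.Nonempty)

variable {𝓘 F}

lemma block_subset_inter (A : Finset E) : block 𝓘 F A ⊆ A ∩ F := filter_subset _ _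

lemma disjoint_block (h𝓘 : IsLaminar (𝓘 : Set (Finset E))) {A B : Finset E} (hA : A ∈ 𝓘)
    (hB : B ∈ 𝓘) (hAB : A ≠ B) : Disjoint (block 𝓘 F A) (block 𝓘 F B) := by
  rw [disjoint_left]
  intro e heA heB
  have heA' := mem_filter.1 heA
  have heB' := mem_filter.1 heB
  rcases h𝓘 hA hB hAB with hsub | hsub | hdisj
  · exact heB'.2 A hA (hsub.ssubset_of_ne hAB) (mem_inter.1 heA'.1).1
  · exact heA'.2 B hB (hsub.ssubset_of_ne hAB.symm) (mem_inter.1 heB'.1).1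
  · exact disjoint_left.1 hdisj (mem_inter.1 heA'.1).1 (mem_inter.1 heB'.1).1

lemma biUnion_block {A : Finset E} (hA : A ∈ 𝓘) :
    (𝓘.filter (· ⊆ A)).biUnion (block 𝓘 F) = A ∩ F := by
  apply Subset.antisymm
  · refine biUnion_subset.2 fun B hB => (block_subset_inter B).trans ?_
    exact inter_subset_inter_right (mem_filter.1 hB).2
  · intro e he
    obtain ⟨heA, heF⟩ := mem_inter.1 he
    obtain ⟨B, hB, hmin⟩ := (𝓘.filter fun B => B ⊆ A ∧ e ∈ B).exists_min_image card
      ⟨A, mem_filter.2 ⟨hA, subset_rfl, heA⟩⟩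
    obtain ⟨hB𝓘, hBA, heB⟩ := mem_filter.1 hB
    refine mem_biUnion.2 ⟨B, mem_filter.2 ⟨hB𝓘, hBA⟩, mem_filter.2 ⟨mem_inter.2 ⟨heB, heF⟩, ?_⟩⟩
    intro B' hB' hB'B heB'
    have := hmin B' (mem_filter.2 ⟨hB', hB'B.subset.trans hBA, heB'⟩)
    exact (card_lt_card hB'B).not_ge this

lemma sum_inter_eq_sum_block {β : Type*} [AddCommMonoid β] (h𝓘 : IsLaminar (𝓘 : Set (Finset E)))
    {A : Finset E} (hA : A ∈ 𝓘) (g : E → β) :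
    ∑ e ∈ A ∩ F, g e = ∑ B ∈ 𝓘.filter (· ⊆ A), ∑ e ∈ block 𝓘 F B, g e := by
  rw [← biUnion_block hA, sum_biUnion]
  intro B hB B' hB' hne
  exact disjoint_block h𝓘 (mem_filter.1 hB).1 (mem_filter.1 hB').1 hne

lemma sum_block_mem {β : Type*} [AddCommGroup β] (G : AddSubgroup β)
    (h𝓘 : IsLaminar (𝓘 : Set (Finset E))) {g : E → β}
    (hg : ∀ A ∈ 𝓘, ∑ e ∈ A ∩ F, g e ∈ G) (A : Finset E) (hA : A ∈ 𝓘) :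
    ∑ e ∈ block 𝓘 F A, g e ∈ G := by
  induction A using Finset.strongInduction with
  | H A ih =>
    have hAA : A ∈ 𝓘.filter (· ⊆ A) := mem_filter.2 ⟨hA, subset_rfl⟩
    have hsplit := sum_inter_eq_sum_block (F := F) h𝓘 hA g
    rw [← add_sum_erase _ _ hAA] at hsplit
    rw [eq_sub_of_add_eq hsplit.symm]
    refine sub_mem (hg A hA) (sum_mem fun B hB => ?_)
    obtain ⟨hBA, hB⟩ := mem_erase.1 hB
    obtain ⟨hB𝓘, hBA'⟩ := mem_filter.1 hB
    exact ih B (hBA'.ssubset_of_ne hBA) hB𝓘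

lemma sum_eq_zero_of_sum_blocks_eq_zero {β : Type*} [AddCommMonoid β]
    (h𝓘 : IsLaminar (𝓘 : Set (Finset E))) {g : E → β} (hgF : ∀ e ∉ F, g e = 0)
    (hg : ∀ B ∈ blocks 𝓘 F, ∑ e ∈ B, g e = 0) {A : Finset E} (hA : A ∈ 𝓘) :
    ∑ e ∈ A, g e = 0 := by
  rw [← sum_filter_of_ne (p := (· ∈ F)) fun e _ he => by_contra fun h => he (hgF e h),
    filter_mem_eq_inter, sum_inter_eq_sum_block h𝓘 hA]
  refine sum_eq_zero fun B hB => ?_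
  rcases (block 𝓘 F B).eq_empty_or_nonempty with h | h
  · rw [h, sum_empty]
  · exact hg _ (mem_filter.2 ⟨mem_image_of_mem _ (mem_filter.1 hB).1, h⟩)

lemma pairwiseDisjoint_blocks (h𝓘 : IsLaminar (𝓘 : Set (Finset E))) :
    (blocks 𝓘 F : Set (Finset E)).PairwiseDisjoint id := by
  rintro B₁ hB₁ B₂ hB₂ hne
  obtain ⟨A₁, hA₁, rfl⟩ := mem_image.1 (mem_filter.1 hB₁).1
  obtain ⟨A₂, hA₂, rfl⟩ := mem_image.1 (mem_filter.1 hB₂).1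
  exact disjoint_block h𝓘 hA₁ hA₂ fun h => hne (h ▸ rfl)

lemma subset_of_mem_blocks {B : Finset E} (hB : B ∈ blocks 𝓘 F) : B ⊆ F := by
  obtain ⟨A, -, rfl⟩ := mem_image.1 (mem_filter.1 hB).1
  exact (block_subset_inter A).trans inter_subset_right

lemma two_le_card_of_mem_blocks {β : Type*} [AddCommGroup β] {G : AddSubgroup β}
    (h𝓘 : IsLaminar (𝓘 : Set (Finset E))) {g : E → β} (hF : ∀ e, e ∈ F ↔ g e ∉ G)
    (hg : ∀ A ∈ 𝓘, ∑ e ∈ A, g e ∈ G) {B : Finset E} (hB : B ∈ blocks 𝓘 F) : 2 ≤ #B := by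
  obtain ⟨hB, hne⟩ := mem_filter.1 hB
  obtain ⟨A, hA, rfl⟩ := mem_image.1 hB
  have hsum : ∑ e ∈ block 𝓘 F A, g e ∈ G := by
    refine sum_block_mem G h𝓘 (fun A' hA' => ?_) A hA
    rw [← filter_mem_eq_inter, ← sub_eq_of_eq_add (sum_filter_add_sum_filter_not A' (· ∈ F) g).symm]
    exact sub_mem (hg A' hA') (sum_mem fun e he => not_not.1 (mt (hF e).2 (mem_filter.1 he).2))
  have hne1 : #(block 𝓘 F A) ≠ 1 := by
    intro h1
    obtain ⟨e, he⟩ := card_eq_one.1 h1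
    rw [he, sum_singleton] at hsum
    have heB : e ∈ block 𝓘 F A := he ▸ mem_singleton_self e
    exact (hF e).1 (subset_of_mem_blocks (mem_filter.2 ⟨hB, hne⟩) heB) hsum
  have := hne.card_pos
  omega

end Blocks

section Kernel

variable [DecidableEq E]

lemma two_mul_card_le_card_biUnion {P : Finset (Finset E)}
    (hP : (P : Set (Finset E)).PairwiseDisjoint id) (hP2 : ∀ A ∈ P, 2 ≤ #A) :
    2 * #P ≤ #(P.biUnion id) := by
  rw [card_biUnion hP, mul_comm]
  exact card_nsmul_le_sum P card 2 hP2

lemma sum_eq_zero_of_biUnion_eq {β : Type*} [AddCommMonoid β] {P Q : Finset (Finset E)}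
    (hP : (P : Set (Finset E)).PairwiseDisjoint id) (hQ : (Q : Set (Finset E)).PairwiseDisjoint id)
    (hPQ : P.biUnion id = Q.biUnion id) {g : E → β} (hgP : ∀ A ∈ P, ∑ e ∈ A, g e = 0)
    {A₀ : Finset E} (hA₀ : A₀ ∈ Q) (hgQ : ∀ A ∈ Q.erase A₀, ∑ e ∈ A, g e = 0) :
    ∑ e ∈ A₀, g e = 0 := by
  have h := congrArg (fun B => ∑ e ∈ B, g e) hPQ
  simp only [sum_biUnion hP, sum_biUnion hQ, ← add_sum_erase _ _ hA₀, id] at h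
  rwa [sum_eq_zero hgP, sum_eq_zero hgQ, add_zero, eq_comm] at h

variable [Fintype E]

lemma exists_ne_zero_supported_sum_eq_zero {F : Finset E} {𝓐 : Finset (Finset E)}
    (h : #𝓐 < #F) :
    ∃ D : E → ℝ, D ≠ 0 ∧ (∀ e ∉ F, D e = 0) ∧ ∀ A ∈ 𝓐, ∑ e ∈ A, D e = 0 := by
  have hcard : #(𝓐 ∪ Fᶜ.image ({·} : E → Finset E)) < Fintype.card E := by
    have := card_union_le 𝓐 (Fᶜ.image ({·} : E → Finset E))
    have := card_image_le (s := Fᶜ) (f := ({·} : E → Finset E))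
    have := card_compl F
    have := card_le_univ F
    omega
  set 𝓑 := 𝓐 ∪ Fᶜ.image ({·} : E → Finset E)
  let Φ : (E → ℝ) →ₗ[ℝ] (𝓑 → ℝ) := LinearMap.pi fun A => ∑ e ∈ A.1, LinearMap.proj e
  have hker : LinearMap.ker Φ ≠ ⊥ := LinearMap.ker_ne_bot_of_finrank_lt (by simpa using hcard)
  obtain ⟨D, hD, hD0⟩ := Submodule.exists_mem_ne_zero_of_ne_bot hker
  have hsum : ∀ A ∈ 𝓑, ∑ e ∈ A, D e = 0 := fun A hA => by
    simpa [Φ] using congrFun (LinearMap.mem_ker.1 hD) ⟨A, hA⟩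
  refine ⟨D, hD0, fun e he => ?_, fun A hA => hsum A (mem_union_left _ hA)⟩
  simpa using hsum {e} (mem_union_right _ (mem_image_of_mem _ (mem_compl.2 he)))

lemma exists_ne_zero_of_two_disjoint_families {F : Finset E} (hF : F.Nonempty)
    {P Q : Finset (Finset E)} (hP : (P : Set (Finset E)).PairwiseDisjoint id)
    (hQ : (Q : Set (Finset E)).PairwiseDisjoint id) (hPF : ∀ A ∈ P, A ⊆ F)
    (hQF : ∀ A ∈ Q, A ⊆ F) (hP2 : ∀ A ∈ P, 2 ≤ #A) (hQ2 : ∀ A ∈ Q, 2 ≤ #A) :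
    ∃ D : E → ℝ, D ≠ 0 ∧ (∀ e ∉ F, D e = 0) ∧ (∀ A ∈ P, ∑ e ∈ A, D e = 0) ∧
      ∀ A ∈ Q, ∑ e ∈ A, D e = 0 := by
  have hPc := two_mul_card_le_card_biUnion hP hP2
  have hQc := two_mul_card_le_card_biUnion hQ hQ2
  have hPsub : P.biUnion id ⊆ F := biUnion_subset.2 hPF
  have hQsub : Q.biUnion id ⊆ F := biUnion_subset.2 hQF
  have hPle := card_le_card hPsub
  have hQle := card_le_card hQsub
  by_cases hlt : #P + #Q < #F
  · obtain ⟨D, hD0, hDF, hD⟩ := exists_ne_zero_supported_sum_eq_zero (𝓐 := P ∪ Q)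
      (lt_of_le_of_lt (card_union_le P Q) hlt)
    exact ⟨D, hD0, hDF, fun A hA => hD A (mem_union_left _ hA),
      fun A hA => hD A (mem_union_right _ hA)⟩
  -- otherwise both families cover `F`, and one equation of `Q` follows from the others
  have hPcov : P.biUnion id = F := eq_of_subset_of_card_le hPsub (by omega)
  have hQcov : Q.biUnion id = F := eq_of_subset_of_card_le hQsub (by omega)
  obtain ⟨A₀, hA₀⟩ : Q.Nonempty := by
    obtain ⟨e, he⟩ := hQcov ▸ hF
    obtain ⟨A, hA, -⟩ := mem_biUnion.1 he
    exact ⟨A, hA⟩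
  have hcard : #(P ∪ Q.erase A₀) < #F := by
    have := card_union_le P (Q.erase A₀)
    have := card_erase_of_mem hA₀
    have := card_pos.2 ⟨A₀, hA₀⟩
    omega
  obtain ⟨D, hD0, hDF, hD⟩ := exists_ne_zero_supported_sum_eq_zero hcard
  have hDP : ∀ A ∈ P, ∑ e ∈ A, D e = 0 := fun A hA => hD A (mem_union_left _ hA)
  have hDQ : ∀ A ∈ Q.erase A₀, ∑ e ∈ A, D e = 0 := fun A hA => hD A (mem_union_right _ hA)
  refine ⟨D, hD0, hDF, hDP, fun A hA => ?_⟩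
  rcases eq_or_ne A A₀ with rfl | h
  · exact sum_eq_zero_of_biUnion_eq hP hQ (hPcov.trans hQcov.symm) hDP hA hDQ
  · exact hDQ A (mem_erase.2 ⟨h, hA⟩)

end Kernel

section Polytope

variable {ι : Type*} (S : ι → Finset E) (lo hi : ι → ℤ)

def Feasible (x : E → ℝ) : Prop :=
  (∀ e, 0 ≤ x e) ∧ ∀ i, (lo i : ℝ) ≤ ∑ e ∈ S i, x e ∧ ∑ e ∈ S i, x e ≤ hi i

-- Singletons stand for the entries of `x`, so entries and constraint sums are rounded alike.
def IsTracked (A : Finset E) : Prop := (∃ e, A = {e}) ∨ ∃ i, S i = A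

variable {S lo hi}

lemma Feasible.of_floor_le_of_le_ceil {x x' : E → ℝ} (hx : Feasible S lo hi x)
    (h : ∀ A, IsTracked S A →
      (⌊∑ e ∈ A, x e⌋ : ℝ) ≤ ∑ e ∈ A, x' e ∧ ∑ e ∈ A, x' e ≤ ⌈∑ e ∈ A, x e⌉) :
    Feasible S lo hi x' := by
  refine ⟨fun e => ?_, fun i => ?_⟩
  · have hfl : (0 : ℝ) ≤ ⌊x e⌋ := by exact_mod_cast Int.floor_nonneg.2 (hx.1 e)
    have he := (h {e} (.inl ⟨e, rfl⟩)).1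
    rw [sum_singleton, sum_singleton] at he
    exact hfl.trans he
  · obtain ⟨hlo, hhi⟩ := h (S i) (.inr ⟨i, rfl⟩)
    have h1 : (lo i : ℝ) ≤ ⌊∑ e ∈ S i, x e⌋ := by exact_mod_cast Int.le_floor.2 (hx.2 i).1
    have h2 : (⌈∑ e ∈ S i, x e⌉ : ℝ) ≤ hi i := by exact_mod_cast Int.ceil_le.2 (hx.2 i).2
    exact ⟨h1.trans hlo, hhi.trans h2⟩

variable [Fintype E]

variable (S) in
open scoped Classical in
noncomputable def fracSets (x : E → ℝ) : Finset (Finset E) :=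
  univ.filter fun A => IsTracked S A ∧ ∑ e ∈ A, x e ∉ intLattice

lemma mem_fracSets {x : E → ℝ} {A : Finset E} :
    A ∈ fracSets S x ↔ IsTracked S A ∧ ∑ e ∈ A, x e ∉ intLattice := by
  simp [fracSets]

variable (side : ι → Bool)

lemma exists_direction (hlam : ∀ b, IsLaminar (S '' {i | side i = b})) {x : E → ℝ}
    (hfrac : ∃ e, x e ∉ intLattice) (f : (E → ℝ) →ₗ[ℝ] ℝ) :
    ∃ D : E → ℝ, (∀ A, IsTracked S A → ∑ e ∈ A, x e ∈ intLattice → ∑ e ∈ A, D e = 0) ∧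
      D ≠ 0 ∧ 0 ≤ f D := by
  classical
  set F := univ.filter fun e => x e ∉ intLattice
  have hF : ∀ e, e ∈ F ↔ x e ∉ intLattice := by simp [F]
  let 𝓘 : Bool → Finset (Finset E) := fun b =>
    univ.filter fun A => A ∈ S '' {i | side i = b} ∧ ∑ e ∈ A, x e ∈ intLattice
  have h𝓘 : ∀ b, IsLaminar (𝓘 b : Set (Finset E)) := fun b =>
    (hlam b).mono fun A hA => (mem_filter.1 hA).2.1
  have h𝓘x : ∀ b, ∀ A ∈ 𝓘 b, ∑ e ∈ A, x e ∈ intLattice := fun b A hA => (mem_filter.1 hA).2.2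
  obtain ⟨e₀, he₀⟩ := hfrac
  obtain ⟨D, hD0, hDF, hDtrue, hDfalse⟩ := exists_ne_zero_of_two_disjoint_families
    ⟨e₀, (hF e₀).2 he₀⟩ (pairwiseDisjoint_blocks (h𝓘 true)) (pairwiseDisjoint_blocks (h𝓘 false))
    (fun _ => subset_of_mem_blocks) (fun _ => subset_of_mem_blocks)
    (fun _ => two_le_card_of_mem_blocks (h𝓘 true) hF (h𝓘x true))
    (fun _ => two_le_card_of_mem_blocks (h𝓘 false) hF (h𝓘x false))
  have hDblocks : ∀ b, ∀ B ∈ blocks (𝓘 b) F, ∑ e ∈ B, D e = 0 := by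
    rintro (_ | _)
    exacts [hDfalse, hDtrue]
  have hD : ∀ A, IsTracked S A → ∑ e ∈ A, x e ∈ intLattice → ∑ e ∈ A, D e = 0 := by
    rintro A (⟨e, rfl⟩ | ⟨i, rfl⟩) hA
    · rw [sum_singleton] at hA ⊢
      exact hDF e fun he => (hF e).1 he hA
    · exact sum_eq_zero_of_sum_blocks_eq_zero (h𝓘 (side i)) hDF (hDblocks (side i))
        (mem_filter.2 ⟨mem_univ _, ⟨i, rfl, rfl⟩, hA⟩)
  rcases le_total 0 (f D) with h | h
  · exact ⟨D, hD, hD0, h⟩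
  · refine ⟨-D, fun A hA hxA => ?_, neg_ne_zero.2 hD0, by simpa using h⟩
    simp [sum_neg_distrib, hD A hA hxA]

lemma exists_feasible_step (hlam : ∀ b, IsLaminar (S '' {i | side i = b})) {x : E → ℝ}
    (hx : Feasible S lo hi x) (hfrac : ∃ e, x e ∉ intLattice) (f : (E → ℝ) →ₗ[ℝ] ℝ) :
    ∃ x', Feasible S lo hi x' ∧ f x ≤ f x' ∧ fracSets S x' ⊂ fracSets S x := by
  classical
  obtain ⟨D, hDint, hD0, hfD⟩ := exists_direction side hlam hfrac f
  set K := (fracSets S x).filter fun A => ∑ e ∈ A, D e ≠ 0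
  have hK : K.Nonempty := by
    obtain ⟨e, he⟩ := Function.ne_iff.1 hD0
    refine ⟨{e}, mem_filter.2 ⟨mem_fracSets.2 ⟨.inl ⟨e, rfl⟩, fun hxe => he ?_⟩, by simpa using he⟩⟩
    simpa using hDint {e} (.inl ⟨e, rfl⟩) hxe
  obtain ⟨ε, hε, hbetween, A₀, hA₀, hA₀int⟩ := exists_common_step hK
    (v := fun A => ∑ e ∈ A, x e) (δ := fun A => ∑ e ∈ A, D e)
    (fun A hA => (mem_fracSets.1 (mem_filter.1 hA).1).2) (fun A hA => (mem_filter.1 hA).2)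
  have hsum : ∀ A : Finset E, ∑ e ∈ A, (x + ε • D) e = ∑ e ∈ A, x e + ε * ∑ e ∈ A, D e := by
    simp [sum_add_distrib, mul_sum]
  have hfixed : ∀ A, IsTracked S A → A ∉ K → ∑ e ∈ A, D e = 0 := by
    intro A hA hAK
    by_contra hDA
    by_cases hxA : ∑ e ∈ A, x e ∈ intLattice
    · exact hDA (hDint A hA hxA)
    · exact hAK (mem_filter.2 ⟨mem_fracSets.2 ⟨hA, hxA⟩, hDA⟩)
  refine ⟨x + ε • D, hx.of_floor_le_of_le_ceil fun A hA => ?_, ?_, ?_⟩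
  · by_cases hAK : A ∈ K
    · rw [hsum]
      exact hbetween A hAK
    · rw [hsum, hfixed A hA hAK, mul_zero, add_zero]
      exact ⟨Int.floor_le _, Int.le_ceil _⟩
  · rw [map_add, map_smul, smul_eq_mul]
    exact le_add_of_nonneg_right (mul_nonneg hε.le hfD)
  · refine Finset.ssubset_iff_subset_ne.2 ⟨fun A hA => ?_, fun h => ?_⟩
    · obtain ⟨hAt, hAx⟩ := mem_fracSets.1 hA
      refine mem_fracSets.2 ⟨hAt, fun hxA => hAx ?_⟩
      rwa [hsum, hDint A hAt hxA, mul_zero, add_zero]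
    · have hA₀' := (mem_filter.1 hA₀).1
      rw [← h] at hA₀'
      exact (mem_fracSets.1 hA₀').2 (by rwa [hsum])

theorem exists_int_feasible_le (hlam : ∀ b, IsLaminar (S '' {i | side i = b})) {x : E → ℝ}
    (hx : Feasible S lo hi x) (f : (E → ℝ) →ₗ[ℝ] ℝ) :
    ∃ z : E → ℤ, Feasible S lo hi (fun e => z e) ∧ f x ≤ f fun e => z e := by
  induction hn : #(fracSets S x) using Nat.strong_induction_on generalizing x with
  | _ n ih =>
    by_cases hint : ∀ e, x e ∈ intLattice
    · choose z hz using hint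
      have hzx : (fun e => (z e : ℝ)) = x := funext hz
      exact ⟨z, hzx ▸ hx, hzx ▸ le_rfl⟩
    · push Not at hint
      obtain ⟨x', hx', hfx, hlt⟩ := exists_feasible_step side hlam hx hint f
      obtain ⟨z, hz, hfz⟩ := ih _ (hn ▸ card_lt_card hlt) hx' rfl
      exact ⟨z, hz, hfx.trans hfz⟩

end Polytope

section Assignment

variable {T M : Type}

def lp1Sets [Fintype M] (Z : M → Finset (Finset T)) :
    T ⊕ {p : M × Finset T // p.2 ∈ Z p.1} → Finset (T × M)
  | .inl t => {t} ×ˢ univ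
  | .inr p => p.1.2 ×ˢ {p.1.1}

lemma isLaminar_lp1Sets [Fintype M] {Z : M → Finset (Finset T)}
    (hlam : ∀ s, IsLaminar (Z s : Set (Finset T))) (b : Bool) :
    IsLaminar (lp1Sets Z '' {i | i.isLeft = b}) := by
  rintro _ ⟨i, hi, rfl⟩ _ ⟨j, hj, rfl⟩ hne
  rcases i with t | ⟨⟨s, R⟩, hR⟩ <;> rcases j with t' | ⟨⟨s', R'⟩, hR'⟩
  · have : t ≠ t' := by rintro rfl; exact hne rfl
    exact .inr (.inr (disjoint_product.2 (.inl (disjoint_singleton.2 this))))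
  · simp_all
  · simp_all
  · by_cases hs : s = s'
    · subst hs
      rcases eq_or_ne R R' with rfl | hRR
      · exact .inl subset_rfl
      rcases hlam s hR hR' hRR with h | h | h
      · exact .inl (product_subset_product_left h)
      · exact .inr (.inl (product_subset_product_left h))
      · exact .inr (.inr (disjoint_product.2 (.inl h)))
    · exact .inr (.inr (disjoint_product.2 (.inr (disjoint_singleton.2 hs))))

lemma lp1Feas_iff_feasible [Fintype T] [Fintype M] {Z : M → Finset (Finset T)}
    {qlo qhi : M → Finset T → ℤ} {C : T → ℤ} {x : T → M → ℝ} :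
    LP1Feas Z (fun s R => (qlo s R : ℝ)) (fun s R => (qhi s R : ℝ)) (fun t => (C t : ℝ)) x ↔
      Feasible (lp1Sets Z) (Sum.elim C fun p => qlo p.1.1 p.1.2)
        (Sum.elim C fun p => qhi p.1.1 p.1.2) (Function.uncurry x) := by
  simp only [LP1Feas, Feasible, Sum.forall, Subtype.forall, Prod.forall, lp1Sets, sum_product,
    sum_singleton, Function.uncurry_apply_pair, Sum.elim_inl, Sum.elim_inr, ← le_antisymm_iff]
  constructor
  · rintro ⟨hpos, hhi, hlo, hrow⟩
    exact ⟨hpos, fun t => (hrow t).symm, fun s R hR => ⟨hlo s R hR, hhi s R hR⟩⟩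
  · rintro ⟨hpos, hrow, hbd⟩
    exact ⟨hpos, fun s R hR => (hbd s R hR).2, fun s R hR => (hbd s R hR).1,
      fun t => (hrow t).symm⟩

theorem exists_int_lp1Feas_le [Fintype T] [Fintype M] {Z : M → Finset (Finset T)}
    (hlam : ∀ s, IsLaminar (Z s : Set (Finset T)))
    {qlo qhi : M → Finset T → ℤ} {C : T → ℤ} {x : T → M → ℝ}
    (hx : LP1Feas Z (fun s R => (qlo s R : ℝ)) (fun s R => (qhi s R : ℝ)) (fun t => (C t : ℝ)) x)
    (f : (T → M → ℝ) →ₗ[ℝ] ℝ) :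
    ∃ z : T → M → ℤ, LP1Feas Z (fun s R => (qlo s R : ℝ)) (fun s R => (qhi s R : ℝ))
      (fun t => (C t : ℝ)) (fun t s => z t s) ∧ f x ≤ f fun t s => z t s := by
  obtain ⟨z, hz, hfz⟩ := exists_int_feasible_le Sum.isLeft (isLaminar_lp1Sets hlam)
    (lp1Feas_iff_feasible.1 hx) (f ∘ₗ (LinearEquiv.curry ℝ ℝ T M).toLinearMap)
  exact ⟨Function.curry z, lp1Feas_iff_feasible.2 hz, hfz⟩

end Assignment

section Residual

variable {T M : Type}

def residualCount [Fintype M] (C : T → ℤ) (y : T → M → ℤ) (t : T) : ℤ := C t - ∑ s, y t s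

def residualLo [DecidableEq M] (phi : M) (qlo : M → Finset T → ℤ) (y : T → M → ℤ) (s : M)
    (R : Finset T) : ℤ :=
  if s = phi then 0 else qlo s R - ∑ t ∈ R, y t s

-- The objective bound of LP2 becomes an upper quota on the column of `phi`.
def residualHi [Fintype T] [Fintype M] [DecidableEq M] (phi : M) (qhi : M → Finset T → ℤ)
    (C : T → ℤ) (y : T → M → ℤ) (OPT : ℤ) (s : M) (R : Finset T) : ℤ :=
  if s = phi then ∑ t, residualCount C y t + ∑ s' ∈ univ.erase phi, ∑ t, y t s' - OPT
  else qhi s R - ∑ t ∈ R, y t s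

variable {phi : M} {qlo qhi : M → Finset T → ℤ} {C : T → ℤ} {OPT : ℤ} {y : T → M → ℤ}
  {x : T → M → ℝ}

lemma add_sum_eq_iff_eq_residualCount [Fintype M] (t : T) :
    ∑ s, x t s + ∑ s, (y t s : ℝ) = C t ↔ ∑ s, x t s = residualCount C y t := by
  rw [residualCount, Int.cast_sub, Int.cast_sum]
  constructor <;> intro h <;> linarith

lemma le_objective_iff_le_residualHi [Fintype T] [Fintype M] [DecidableEq M]
    (hx : ∀ t, ∑ s, x t s = residualCount C y t) :
    (OPT : ℝ) ≤ ∑ t, ∑ s ∈ univ.erase phi, x t s + ∑ s ∈ univ.erase phi, ∑ t, (y t s : ℝ) ↔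
      ∑ t, x t phi ≤ residualHi phi qhi C y OPT phi univ := by
  have hobj : ∑ t, ∑ s ∈ univ.erase phi, x t s =
      ∑ t, (residualCount C y t : ℝ) - ∑ t, x t phi := by
    rw [← sum_sub_distrib]
    exact sum_congr rfl fun t _ => by rw [sum_erase_eq_sub (mem_univ _), hx]
  rw [hobj, residualHi, if_pos rfl]
  push_cast
  constructor <;> intro <;> linarith

lemma residualLo_of_ne [DecidableEq M] {s : M} (hs : s ≠ phi) (R : Finset T) :
    (residualLo phi qlo y s R : ℝ) = qlo s R - ∑ t ∈ R, (y t s : ℝ) := by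
  simp [residualLo, hs]

lemma residualHi_of_ne [Fintype T] [Fintype M] [DecidableEq M] {s : M} (hs : s ≠ phi)
    (R : Finset T) :
    (residualHi phi qhi C y OPT s R : ℝ) = qhi s R - ∑ t ∈ R, (y t s : ℝ) := by
  simp [residualHi, hs]

variable {Z : M → Finset (Finset T)}

lemma LP2Feas.lp1Feas_residual [Fintype T] [Fintype M] [DecidableEq M]
    (hx : LP2Feas phi Z (fun s R => (qlo s R : ℝ)) (fun s R => (qhi s R : ℝ))
      (fun t => (C t : ℝ)) OPT (fun t s => (y t s : ℝ)) (fun _ _ => 0) x) :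
    LP1Feas (Function.update Z phi {univ}) (fun s R => (residualLo phi qlo y s R : ℝ))
      (fun s R => (residualHi phi qhi C y OPT s R : ℝ)) (fun t => (residualCount C y t : ℝ)) x := by
  obtain ⟨hpos, hopt, hhi, hlo, hrow⟩ := hx
  simp only [sum_const_zero, add_zero] at hhi hlo
  have hrow' := fun t => (add_sum_eq_iff_eq_residualCount t).1 (hrow t)
  refine ⟨hpos, fun s R hR => ?_, fun s R hR => ?_, hrow'⟩
  · by_cases hs : s = phi
    · subst hs
      obtain rfl : R = univ := by simpa using hR
      exact (le_objective_iff_le_residualHi hrow').1 hopt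
    · rw [Function.update_of_ne hs] at hR
      linarith [hhi s R hR, residualHi_of_ne (qhi := qhi) (C := C) (OPT := OPT) (y := y) hs R]
  · by_cases hs : s = phi
    · subst hs
      obtain rfl : R = univ := by simpa using hR
      simpa [residualLo] using sum_nonneg fun t _ => hpos t s
    · rw [Function.update_of_ne hs] at hR
      linarith [hlo s R hR, residualLo_of_ne (qlo := qlo) (y := y) hs R]

lemma LP1Feas.lp2Feas_of_residual [Fintype T] [Fintype M] [DecidableEq M] (hZphi : Z phi = ∅)
    (hx : LP1Feas (Function.update Z phi {univ}) (fun s R => (residualLo phi qlo y s R : ℝ))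
      (fun s R => (residualHi phi qhi C y OPT s R : ℝ)) (fun t => (residualCount C y t : ℝ)) x) :
    LP2Feas phi Z (fun s R => (qlo s R : ℝ)) (fun s R => (qhi s R : ℝ))
      (fun t => (C t : ℝ)) OPT (fun t s => (y t s : ℝ)) (fun _ _ => 0) x := by
  obtain ⟨hpos, hhi, hlo, hrow⟩ := hx
  have hZ : ∀ s, ∀ R ∈ Z s, s ≠ phi ∧ R ∈ Function.update Z phi {univ} s := by
    intro s R hR
    have hs : s ≠ phi := by rintro rfl; simp [hZphi] at hR
    exact ⟨hs, by rwa [Function.update_of_ne hs]⟩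
  refine ⟨hpos, (le_objective_iff_le_residualHi hrow).2 (hhi phi univ (by simp)),
    fun s R hR => ?_, fun s R hR => ?_, fun t => (add_sum_eq_iff_eq_residualCount t).2 (hrow t)⟩
  · obtain ⟨hs, hR'⟩ := hZ s R hR
    simp only [sum_const_zero, add_zero]
    linarith [hhi s R hR', residualHi_of_ne (qhi := qhi) (C := C) (OPT := OPT) (y := y) hs R]
  · obtain ⟨hs, hR'⟩ := hZ s R hR
    simp only [sum_const_zero, add_zero]
    linarith [hlo s R hR', residualLo_of_ne (qlo := qlo) (y := y) hs R]

lemma lp2Feas_iff_lp1Feas_residual [Fintype T] [Fintype M] [DecidableEq M] (hZphi : Z phi = ∅) :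
    LP2Feas phi Z (fun s R => (qlo s R : ℝ)) (fun s R => (qhi s R : ℝ))
        (fun t => (C t : ℝ)) OPT (fun t s => (y t s : ℝ)) (fun _ _ => 0) x ↔
      LP1Feas (Function.update Z phi {univ}) (fun s R => (residualLo phi qlo y s R : ℝ))
        (fun s R => (residualHi phi qhi C y OPT s R : ℝ))
        (fun t => (residualCount C y t : ℝ)) x :=
  ⟨LP2Feas.lp1Feas_residual, LP1Feas.lp2Feas_of_residual hZphi⟩

lemma isLaminar_update [DecidableEq M] (hlam : ∀ s, IsLaminar (Z s : Set (Finset T)))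
    (A : Finset T) (s : M) :
    IsLaminar (Function.update Z phi {A} s : Set (Finset T)) := by
  rcases eq_or_ne s phi with rfl | hs
  · simp [IsLaminar]
  · rw [Function.update_of_ne hs]
    exact hlam s

end Residual

end LaminarLP

open Finset in
theorem stmt14_general {T M : Type} [Fintype T] [Fintype M] [DecidableEq M]
    (phi : M) (Z : M → Finset (Finset T))
    (qloZ qhiZ : M → Finset T → ℤ) (CZ : T → ℤ) (OPT : ℝ)
    (hZphi : Z phi = ∅)
    (hlam : ∀ s, ∀ R ∈ Z s, ∀ R' ∈ Z s, R ⊆ R' ∨ R' ⊆ R ∨ Disjoint R R')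
    (hOPT : IsGreatest {v : ℝ | ∃ x : T → M → ℝ,
      LP1Feas Z (fun s R => (qloZ s R : ℝ)) (fun s R => (qhiZ s R : ℝ))
        (fun t => (CZ t : ℝ)) x ∧ ∑ t, ∑ s ∈ univ.erase phi, x t s = v} OPT) :
    (∀ (yZ : T → M → ℤ) (t : T) (s : M),
      ¬ (0 < sSup {a : ℝ | ∃ x, LP2Feas phi Z (fun s R => (qloZ s R : ℝ))
            (fun s R => (qhiZ s R : ℝ)) (fun t => (CZ t : ℝ)) OPT
            (fun t s => (yZ t s : ℝ)) (fun _ _ => 0) x ∧ x t s = a} ∧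
          sSup {a : ℝ | ∃ x, LP2Feas phi Z (fun s R => (qloZ s R : ℝ))
            (fun s R => (qhiZ s R : ℝ)) (fun t => (CZ t : ℝ)) OPT
            (fun t s => (yZ t s : ℝ)) (fun _ _ => 0) x ∧ x t s = a} < 1)) ∧
    (∃ xZ : T → M → ℤ,
      LP1Feas Z (fun s R => (qloZ s R : ℝ)) (fun s R => (qhiZ s R : ℝ))
        (fun t => (CZ t : ℝ)) (fun t s => (xZ t s : ℝ)) ∧
      ∑ t, ∑ s ∈ univ.erase phi, ((xZ t s : ℝ)) = OPT) := by
  have hlam' : ∀ s, LaminarLP.IsLaminar (Z s : Set (Finset T)) :=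
    fun s R hR R' hR' _ => hlam s R hR R' hR'
  obtain ⟨xZ, hxZ, hxZOPT⟩ : ∃ xZ : T → M → ℤ,
      LP1Feas Z (fun s R => (qloZ s R : ℝ)) (fun s R => (qhiZ s R : ℝ))
        (fun t => (CZ t : ℝ)) (fun t s => (xZ t s : ℝ)) ∧
      ∑ t, ∑ s ∈ univ.erase phi, ((xZ t s : ℝ)) = OPT := by
    obtain ⟨x, hx, rfl⟩ := hOPT.1
    let f : (T → M → ℝ) →ₗ[ℝ] ℝ := ∑ t, ∑ s ∈ univ.erase phi, LinearMap.proj s ∘ₗ LinearMap.proj t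
    obtain ⟨z, hz, hfz⟩ := LaminarLP.exists_int_lp1Feas_le hlam' hx f
    exact ⟨z, hz, le_antisymm (hOPT.2 ⟨_, hz, rfl⟩) (by simpa [f] using hfz)⟩
  refine ⟨fun yZ t s => ?_, xZ, hxZ, hxZOPT⟩
  have hOPTZ : OPT = ((∑ t, ∑ s ∈ univ.erase phi, xZ t s : ℤ) : ℝ) := by
    push_cast
    exact hxZOPT.symm
  simp only [hOPTZ, LaminarLP.lp2Feas_iff_lp1Feas_residual hZphi]
  refine LaminarLP.sSup_notMem_Ioo_zero_one ?_
  rintro _ ⟨x, hx, rfl⟩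
  obtain ⟨z, hz, hzx⟩ :=
    LaminarLP.exists_int_lp1Feas_le (LaminarLP.isLaminar_update (phi := phi) hlam' univ) hx
      (LinearMap.proj s ∘ₗ LinearMap.proj t)
  exact ⟨z t s, ⟨_, hz, rfl⟩, hzx⟩

open Finset in
/-- **Proposition 1 (laminar problems).**  Suppose the assignment problem is laminar (for
every school `s` any two constrained type sets in `Z s` are nested or disjoint) and all
quotas and type counts are integers, and `OPT` is the optimal value of LP1.  Then at any
step of the serial dictatorship with dynamic menus in which the incomplete assignment `y`
is integral and `Δ ≡ 0`, no student is partially assigned: for every type `t` and school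
`s`, the LP value `f(t,s) = max x t s` over LP2-feasible `x` is never strictly between `0`
and `1`.  Hence the algorithm outputs an integral assignment that is feasible with respect
to the original quotas `q` (achieving `OPT`) with `Δ ≡ 0`. -/
theorem stmt14 {T M : Type} [Fintype T] [Fintype M] [DecidableEq T] [DecidableEq M]
    (phi : M) (Z : M → Finset (Finset T))
    (qloZ qhiZ : M → Finset T → ℤ) (CZ : T → ℤ) (OPT : ℝ)
    (hZphi : Z phi = ∅)
    (hlam : ∀ s, ∀ R ∈ Z s, ∀ R' ∈ Z s, R ⊆ R' ∨ R' ⊆ R ∨ Disjoint R R')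
    (hOPT : IsGreatest {v : ℝ | ∃ x : T → M → ℝ,
      LP1Feas Z (fun s R => (qloZ s R : ℝ)) (fun s R => (qhiZ s R : ℝ))
        (fun t => (CZ t : ℝ)) x ∧ ∑ t, ∑ s ∈ univ.erase phi, x t s = v} OPT) :
    (∀ (yZ : T → M → ℤ) (t : T) (s : M),
      ¬ (0 < sSup {a : ℝ | ∃ x, LP2Feas phi Z (fun s R => (qloZ s R : ℝ))
            (fun s R => (qhiZ s R : ℝ)) (fun t => (CZ t : ℝ)) OPT
            (fun t s => (yZ t s : ℝ)) (fun _ _ => 0) x ∧ x t s = a} ∧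
          sSup {a : ℝ | ∃ x, LP2Feas phi Z (fun s R => (qloZ s R : ℝ))
            (fun s R => (qhiZ s R : ℝ)) (fun t => (CZ t : ℝ)) OPT
            (fun t s => (yZ t s : ℝ)) (fun _ _ => 0) x ∧ x t s = a} < 1)) ∧
    (∃ xZ : T → M → ℤ,
      LP1Feas Z (fun s R => (qloZ s R : ℝ)) (fun s R => (qhiZ s R : ℝ))
        (fun t => (CZ t : ℝ)) (fun t s => (xZ t s : ℝ)) ∧
      ∑ t, ∑ s ∈ univ.erase phi, ((xZ t s : ℝ)) = OPT) :=
  stmt14_general phi Z qloZ qhiZ CZ OPT hZphi hlam hOPT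
end
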